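/- arXiv:2510.02019 — 7 statements merged into one kernel-verified Lean document; each statement's English description precedes it below -/
import Mathlib

section
/- Let (E, j) be a soft inductive system of normed spaces and let a = (a_n) be a j-convergent net, meaning lim_m limsup_n ‖a_n − j_{nm} a_m‖ = 0. Then the limit lim_n ‖a_n‖ exists (the net of norms converges in ℝ). -/
open Filter Topology

section SoftSystems

variable {ι : Type*} [Preorder ι] {E : ι → Type*} [∀ n, NormedAddCommGroup (E n)]
  [∀ n, NormedSpace ℂ (E n)]

/-- A *soft inductive system* of normed spaces: the connecting maps `j n m : E m → E n`
(for `m ≤ n`) are linear contractions and are asymptotically transitive: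
`lim_m limsup_n ‖(j n l − j n m ∘ j m l) a‖ = 0` for every `l` and `a : E l`. -/
def IsSoftSystem (j : ∀ n m, E m →L[ℂ] E n) : Prop :=
  (∀ n m, m ≤ n → ‖j n m‖ ≤ 1) ∧
  ∀ (l : ι) (a : E l),
    Tendsto (fun m => limsup (fun n => ‖j n l a - j n m (j m l a)‖) atTop) atTop (𝓝 0)

/-- A net is *j-convergent* if `lim_m limsup_n ‖a n − j n m (a m)‖ = 0`. -/
def JConv (j : ∀ n m, E m →L[ℂ] E n) (a : ∀ n, E n) : Prop :=
  Tendsto (fun m => limsup (fun n => ‖a n - j n m (a m)‖) atTop) atTop (𝓝 0)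

/-- A net is *null* if its norms tend to zero along the directed index set. -/
def IsNullNet (a : ∀ n, E n) : Prop :=
  Tendsto (fun n => ‖a n‖) atTop (𝓝 0)

end SoftSystems

/-! Since the connecting maps are contractions, `‖a n‖ ≤ ‖a n - j n m (a m)‖ + ‖a m‖` for
`n ≥ m`, so `limsup ‖a‖ ≤ c m + ‖a m‖` where `c m → 0` is the `j`-convergence defect. Hence
`‖a m‖` is eventually at least `limsup ‖a‖ - ε` for every `ε > 0`, and the liminf equals the
limsup. -/

theorem Filter.tendsto_limsup_of_limsup_le_add {α : Type*} {l : Filter α} [l.NeBot]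
    {f c : α → ℝ} (hf_le : IsBoundedUnder (· ≤ ·) l f) (hf_ge : IsBoundedUnder (· ≥ ·) l f)
    (hc : Tendsto c l (𝓝 0)) (h : ∀ᶠ m in l, limsup f l ≤ c m + f m) :
    Tendsto f l (𝓝 (limsup f l)) := by
  refine tendsto_of_le_liminf_of_limsup_le (le_of_forall_pos_le_add fun ε hε => ?_) le_rfl
    hf_le hf_ge
  have hf_near : ∀ᶠ m in l, limsup f l - ε ≤ f m := by
    filter_upwards [h, hc.eventually (gt_mem_nhds hε)] with m hm hcm
    linarith
  linarith [le_liminf_of_le hf_le.isCoboundedUnder_ge hf_near]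

theorem ContinuousLinearMap.norm_apply_le_of_opNorm_le_one {𝕜 E F : Type*}
    [NontriviallyNormedField 𝕜] [SeminormedAddCommGroup E] [SeminormedAddCommGroup F]
    [NormedSpace 𝕜 E] [NormedSpace 𝕜 F] {T : E →L[𝕜] F} (hT : ‖T‖ ≤ 1) (y : E) :
    ‖T y‖ ≤ ‖y‖ := by
  simpa using T.le_of_opNorm_le hT y

theorem limsup_norm_le_limsup_norm_sub_add {𝕜 ι : Type*} [NontriviallyNormedField 𝕜]
    [Preorder ι] [Nonempty ι] [IsDirected ι (· ≤ ·)] {E : ι → Type*}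
    [∀ n, SeminormedAddCommGroup (E n)] [∀ n, NormedSpace 𝕜 (E n)]
    {j : ∀ n m, E m →L[𝕜] E n} (hj : ∀ n m, m ≤ n → ‖j n m‖ ≤ 1)
    {a : ∀ n, E n} {C : ℝ} (ha : ∀ n, ‖a n‖ ≤ C) (m : ι) :
    limsup (fun n => ‖a n‖) atTop ≤
      limsup (fun n => ‖a n - j n m (a m)‖) atTop + ‖a m‖ := by
  have hdev_le : ∀ᶠ n in atTop, ‖a n - j n m (a m)‖ ≤ C + ‖a m‖ := by
    filter_upwards [eventually_ge_atTop m] with n hn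
    calc ‖a n - j n m (a m)‖ ≤ ‖a n‖ + ‖j n m (a m)‖ := norm_sub_le _ _
      _ ≤ C + ‖a m‖ := add_le_add (ha n) ((j n m).norm_apply_le_of_opNorm_le_one (hj n m hn) _)
  have hdev_bdd : IsBoundedUnder (· ≤ ·) atTop fun n => ‖a n - j n m (a m)‖ :=
    isBoundedUnder_of_eventually_le hdev_le
  have hdev_cobdd : IsCoboundedUnder (· ≤ ·) atTop fun n => ‖a n - j n m (a m)‖ :=
    (isBoundedUnder_of ⟨0, fun n => norm_nonneg _⟩).isCoboundedUnder_le
  have hnorm_cobdd : IsCoboundedUnder (· ≤ ·) atTop fun n => ‖a n‖ :=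
    (isBoundedUnder_of ⟨0, fun n => norm_nonneg _⟩).isCoboundedUnder_le
  calc limsup (fun n => ‖a n‖) atTop
      ≤ limsup (fun n => ‖a n - j n m (a m)‖ + ‖a m‖) atTop := by
        refine limsup_le_limsup ?_ hnorm_cobdd (isBoundedUnder_le_add hdev_bdd isBoundedUnder_const)
        filter_upwards [eventually_ge_atTop m] with n hn
        calc ‖a n‖ ≤ ‖a n - j n m (a m)‖ + ‖j n m (a m)‖ := norm_le_norm_sub_add _ _
          _ ≤ ‖a n - j n m (a m)‖ + ‖a m‖ := by
            gcongr
            exact (j n m).norm_apply_le_of_opNorm_le_one (hj n m hn) _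
    _ = limsup (fun n => ‖a n - j n m (a m)‖) atTop + ‖a m‖ :=
        limsup_add_const _ _ _ hdev_bdd hdev_cobdd

/-- In a soft inductive system of normed spaces, the net of norms of a
j-convergent (uniformly bounded) net converges in `ℝ`. -/
theorem stmt2 {ι : Type*} [Preorder ι] [Nonempty ι] [IsDirected ι (· ≤ ·)]
    {E : ι → Type*} [∀ n, NormedAddCommGroup (E n)] [∀ n, NormedSpace ℂ (E n)]
    (j : ∀ n m, E m →L[ℂ] E n) (hj : IsSoftSystem j)
    (a : lp E ⊤) (ha : JConv j (fun n => a n)) :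
    ∃ L : ℝ, Tendsto (fun n => ‖a n‖) atTop (𝓝 L) := by
  have ha_bdd : ∀ n, ‖a n‖ ≤ ‖a‖ := lp.norm_apply_le_norm ENNReal.top_ne_zero a
  exact ⟨_, tendsto_limsup_of_limsup_le_add (isBoundedUnder_of ⟨_, ha_bdd⟩)
    (isBoundedUnder_of ⟨0, fun n => norm_nonneg _⟩) ha
    (Eventually.of_forall (limsup_norm_le_limsup_norm_sub_add hj.1 ha_bdd))⟩
end

section
/- Let (E, j) be a soft inductive system of normed spaces. The set C(E, j) of j-convergent bounded nets is a closed linear subspace of the space ℕets(E) of uniformly bounded nets with the sup norm, and it contains all null nets and all basic nets (j_{nl} a_l)_{n} for fixed l and a_l ∈ E_l (where j_{nl} := 0 if n is not ≥ l and j_{ll} := id). -/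
open Filter Topology

/-! For each `m`, the defect `f ↦ limsup_n ‖f n - j n m (f m)‖` is a seminorm on `ℓ^∞(E)`: it is
the limsup seminorm `g ↦ limsup_n ‖g n‖` composed with `id - J_m`, where `J_m f` is the basic net
starting at `f m`. The j-convergent nets are exactly those along which this family of seminorms
tends to `0`; for any family of seminorms that set is a submodule, and it is closed because the
defects are all bounded by `2 ‖f‖`, hence uniformly equicontinuous. A null net has defect at most
`‖f m‖ → 0`, and for a basic net the defect tending to `0` is asymptotic transitivity itself. -/

open scoped NNReal ENNReal

namespace Seminorm

section Submodule

variable {𝕜 E ι : Type*} [SeminormedRing 𝕜] [AddCommGroup E] [Module 𝕜 E]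

def tendstoZeroSubmodule (p : ι → Seminorm 𝕜 E) (l : Filter ι) : Submodule 𝕜 E where
  carrier := {x | Tendsto (fun i => p i x) l (𝓝 0)}
  zero_mem' := by simpa only [Set.mem_ofPred_eq, map_zero] using tendsto_const_nhds
  add_mem' {x y} hx hy :=
    squeeze_zero (fun i => apply_nonneg _ _) (fun i => map_add_le_add (p i) x y)
      (by simpa using hx.add hy)
  smul_mem' c x hx := by
    simpa only [Set.mem_ofPred_eq, map_smul_eq_mul, mul_zero] using hx.const_mul ‖c‖

theorem mem_tendstoZeroSubmodule {p : ι → Seminorm 𝕜 E} {l : Filter ι} {x : E} :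
    x ∈ tendstoZeroSubmodule p l ↔ Tendsto (fun i => p i x) l (𝓝 0) :=
  Iff.rfl

end Submodule

variable {𝕜 E ι : Type*} [NormedField 𝕜] [SeminormedAddCommGroup E] [NormedSpace 𝕜 E]

theorem lipschitzWith_of_le {p : Seminorm 𝕜 E} {K : ℝ≥0} (hp : ∀ x, p x ≤ K * ‖x‖) :
    LipschitzWith K p :=
  LipschitzWith.of_dist_le_mul fun x y => by
    simpa only [dist_eq_norm, Real.norm_eq_abs] using (abs_sub_map_le_sub p x y).trans (hp (x - y))

theorem isClosed_tendstoZeroSubmodule {p : ι → Seminorm 𝕜 E} {K : ℝ≥0}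
    (hp : ∀ i x, p i x ≤ K * ‖x‖) (l : Filter ι) :
    IsClosed (tendstoZeroSubmodule p l : Set E) :=
  (LipschitzWith.uniformEquicontinuous (fun i => ⇑(p i)) K fun i =>
    lipschitzWith_of_le (hp i)).equicontinuous.isClosed_setOfPred_tendsto continuous_const

end Seminorm

namespace lp

variable {𝕜 ι : Type*} [NormedField 𝕜] {E : ι → Type*} [∀ i, NormedAddCommGroup (E i)]
  [∀ i, NormedSpace 𝕜 (E i)]

theorem isBoundedUnder_norm_apply (l : Filter ι) (f : lp E ∞) :
    IsBoundedUnder (· ≤ ·) l fun i => ‖f i‖ :=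
  isBoundedUnder_of ⟨‖f‖, norm_apply_le_norm ENNReal.top_ne_zero f⟩

theorem isCoboundedUnder_norm_apply (l : Filter ι) [l.NeBot] (f : lp E ∞) :
    IsCoboundedUnder (· ≤ ·) l fun i => ‖f i‖ :=
  isCoboundedUnder_le_of_le l fun _ => norm_nonneg _

variable (𝕜) in
noncomputable def limsupSeminorm (l : Filter ι) [l.NeBot] : Seminorm 𝕜 (lp E ∞) :=
  Seminorm.of (fun f => limsup (fun i => ‖f i‖) l)
    (fun f g =>
      calc limsup (fun i => ‖(f + g) i‖) l ≤ limsup (fun i => ‖f i‖ + ‖g i‖) l :=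
            limsup_le_limsup (.of_forall fun i => norm_add_le _ _)
              (isCoboundedUnder_norm_apply l _)
              (isBoundedUnder_le_add (isBoundedUnder_norm_apply l f)
                (isBoundedUnder_norm_apply l g))
        _ ≤ limsup (fun i => ‖f i‖) l + limsup (fun i => ‖g i‖) l :=
            limsup_add_le (isBoundedUnder_of ⟨0, fun i => norm_nonneg _⟩)
              (isBoundedUnder_norm_apply l f) (isCoboundedUnder_norm_apply l g)
              (isBoundedUnder_norm_apply l g))
    (fun c f => by
      simp only [coeFn_smul, Pi.smul_apply, norm_smul]
      exact ((monotone_mul_left_of_nonneg (norm_nonneg c)).map_limsup_of_continuousAt _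
        (continuous_const_mul _).continuousAt (isBoundedUnder_norm_apply l f)
        (isCoboundedUnder_norm_apply l f)).symm)

theorem limsupSeminorm_apply (l : Filter ι) [l.NeBot] (f : lp E ∞) :
    limsupSeminorm 𝕜 l f = limsup (fun i => ‖f i‖) l :=
  rfl

theorem limsupSeminorm_le {l : Filter ι} [l.NeBot] {f : lp E ∞} {c : ℝ} (hf : ∀ i, ‖f i‖ ≤ c) :
    limsupSeminorm 𝕜 l f ≤ c :=
  limsup_le_of_le (isCoboundedUnder_norm_apply l f) (.of_forall hf)

end lp

section ContractiveSystems

variable {𝕜 ι : Type*} [NormedField 𝕜] {E : ι → Type*} [∀ i, NormedAddCommGroup (E i)]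
  [∀ i, NormedSpace 𝕜 (E i)]
  (j : ∀ n m, E m →L[𝕜] E n) (hj : ∀ n m (x : E m), ‖j n m x‖ ≤ ‖x‖)

noncomputable def basicNetMap (m : ι) : lp E ∞ →ₗ[𝕜] lp E ∞ where
  toFun f := ⟨fun n => j n m (f m), memℓp_infty ⟨‖f m‖, by rintro _ ⟨n, rfl⟩; exact hj n m (f m)⟩⟩
  map_add' f g := lp.ext <| funext fun n => map_add (j n m) (f m) (g m)
  map_smul' c f := lp.ext <| funext fun n => map_smul (j n m) c (f m)

@[simp]
theorem basicNetMap_apply (m : ι) (f : lp E ∞) (n : ι) : basicNetMap j hj m f n = j n m (f m) :=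
  rfl

variable [Preorder ι] [Nonempty ι] [IsDirected ι (· ≤ ·)]

noncomputable def jDefect (m : ι) : Seminorm 𝕜 (lp E ∞) :=
  (lp.limsupSeminorm 𝕜 atTop).comp (LinearMap.id - basicNetMap j hj m)

theorem jDefect_eq_limsupSeminorm (m : ι) (f : lp E ∞) :
    jDefect j hj m f = lp.limsupSeminorm 𝕜 atTop (f - basicNetMap j hj m f) :=
  rfl

theorem jDefect_apply (m : ι) (f : lp E ∞) :
    jDefect j hj m f = limsup (fun n => ‖f n - j n m (f m)‖) atTop := by
  rw [jDefect_eq_limsupSeminorm, lp.limsupSeminorm_apply]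
  simp only [lp.coeFn_sub, Pi.sub_apply, basicNetMap_apply]

theorem jDefect_le (m : ι) (f : lp E ∞) : jDefect j hj m f ≤ (2 : ℝ≥0) * ‖f‖ := by
  have hf := lp.norm_apply_le_norm ENNReal.top_ne_zero f
  rw [jDefect_apply]
  refine limsup_le_of_le (isCoboundedUnder_le_of_le atTop fun _ => norm_nonneg _)
    (.of_forall fun n => ?_)
  calc ‖f n - j n m (f m)‖ ≤ ‖f n‖ + ‖f m‖ := norm_sub_le_of_le le_rfl (hj n m (f m))
    _ ≤ (2 : ℝ≥0) * ‖f‖ := by push_cast; linarith [hf n, hf m]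

noncomputable def jConvSubmodule : Submodule 𝕜 (lp E ∞) :=
  Seminorm.tendstoZeroSubmodule (jDefect j hj) atTop

theorem isClosed_jConvSubmodule : IsClosed (jConvSubmodule j hj : Set (lp E ∞)) :=
  Seminorm.isClosed_tendstoZeroSubmodule (jDefect_le j hj) atTop

theorem mem_jConvSubmodule_of_tendsto_norm {f : lp E ∞}
    (hf : Tendsto (fun n => ‖f n‖) atTop (𝓝 0)) : f ∈ jConvSubmodule j hj := by
  have hdefect (m : ι) : jDefect j hj m f ≤ ‖f m‖ :=
    calc jDefect j hj m f
        ≤ lp.limsupSeminorm 𝕜 atTop f + lp.limsupSeminorm 𝕜 atTop (basicNetMap j hj m f) :=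
          (jDefect_eq_limsupSeminorm j hj m f).trans_le (map_sub_le_add _ _ _)
      _ ≤ 0 + ‖f m‖ := by
          gcongr
          · exact (lp.limsupSeminorm_apply atTop f).trans_le hf.limsup_eq.le
          · exact lp.limsupSeminorm_le fun n => hj n m (f m)
      _ = ‖f m‖ := zero_add _
  exact squeeze_zero (fun m => apply_nonneg _ _) hdefect hf

end ContractiveSystems

section SoftSystems

variable {ι : Type*} [Preorder ι] {E : ι → Type*} [∀ n, NormedAddCommGroup (E n)]
  [∀ n, NormedSpace ℂ (E n)] {j : ∀ n m, E m →L[ℂ] E n}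

theorem IsSoftSystem.norm_apply_le (hj : IsSoftSystem j) (hzero : ∀ n m, ¬ m ≤ n → j n m = 0)
    (n m : ι) (x : E m) : ‖j n m x‖ ≤ ‖x‖ := by
  by_cases hmn : m ≤ n
  · simpa using (j n m).le_of_opNorm_le (hj.1 n m hmn) x
  · simp [hzero n m hmn]

theorem coe_jConvSubmodule [Nonempty ι] [IsDirected ι (· ≤ ·)]
    (hj : ∀ n m (x : E m), ‖j n m x‖ ≤ ‖x‖) :
    (jConvSubmodule j hj : Set (lp E ∞)) = {f : lp E ∞ | JConv j fun n => f n} :=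
  Set.ext fun f => by
    simp only [SetLike.mem_coe, jConvSubmodule, Seminorm.mem_tendstoZeroSubmodule, jDefect_apply,
      Set.mem_ofPred_eq, JConv]

end SoftSystems

theorem stmt3_general {ι : Type*} [Preorder ι] [Nonempty ι] [IsDirected ι (· ≤ ·)]
    {E : ι → Type*} [∀ n, NormedAddCommGroup (E n)] [∀ n, NormedSpace ℂ (E n)]
    (j : ∀ n m, E m →L[ℂ] E n) (hj : IsSoftSystem j)
    (hzero : ∀ n m, ¬ m ≤ n → j n m = 0) :
    ∃ C : Submodule ℂ (lp E ⊤),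
      (C : Set (lp E ⊤)) = {f : lp E ⊤ | JConv j (fun n => f n)} ∧
      IsClosed (C : Set (lp E ⊤)) ∧
      (∀ f : lp E ⊤, IsNullNet (fun n => f n) → f ∈ C) ∧
      (∀ (l : ι) (a : E l) (f : lp E ⊤), (∀ n, f n = j n l a) → f ∈ C) := by
  have hcontr := hj.norm_apply_le hzero
  refine ⟨jConvSubmodule j hcontr, coe_jConvSubmodule hcontr, isClosed_jConvSubmodule j hcontr,
    fun f hf => mem_jConvSubmodule_of_tendsto_norm j hcontr hf, fun l a f hf => ?_⟩
  rw [← SetLike.mem_coe, coe_jConvSubmodule, Set.mem_ofPred_eq, funext hf]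
  exact hj.2 l a

/-- The set `C(E,j)` of j-convergent bounded nets is a closed linear subspace
of `ℕets(E) = lp E ⊤`; it contains all null nets and all basic nets `n ↦ j n l a` (with the
conventions `j n m = 0` for `n ≱ m` and `j n n = id`). -/
theorem stmt3 {ι : Type*} [Preorder ι] [Nonempty ι] [IsDirected ι (· ≤ ·)]
    {E : ι → Type*} [∀ n, NormedAddCommGroup (E n)] [∀ n, NormedSpace ℂ (E n)]
    (j : ∀ n m, E m →L[ℂ] E n) (hj : IsSoftSystem j)
    (hzero : ∀ n m, ¬ m ≤ n → j n m = 0)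
    (hid : ∀ n, j n n = ContinuousLinearMap.id ℂ (E n)) :
    ∃ C : Submodule ℂ (lp E ⊤),
      (C : Set (lp E ⊤)) = {f : lp E ⊤ | JConv j (fun n => f n)} ∧
      IsClosed (C : Set (lp E ⊤)) ∧
      (∀ f : lp E ⊤, IsNullNet (fun n => f n) → f ∈ C) ∧
      (∀ (l : ι) (a : E l) (f : lp E ⊤), (∀ n, f n = j n l a) → f ∈ C) :=
  stmt3_general j hj hzero
end

section
/- Let (E, j) be a soft inductive system of normed spaces over a directed set N and let N_0 ⊆ N be a cofinal subset. Then the restriction of (E, j) to indices in N_0 is again a soft inductive system, and its limit space is isometrically isomorphic to the limit space E_∞ of the original system. -/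
/-!
For a bounded `j`-convergent net `a`, contractivity gives `limsup ‖a‖ ≤ ‖a m‖ + ε` for all late
`m`, so `‖a n‖` converges; its limit is the quotient norm of the class of `a`. Hence restriction to
a cofinal `N₀` preserves `j`-convergence, null nets and norms, and induces an isometric injection of
the limit spaces.

For surjectivity, a `j`-convergent net `b` on `N₀` is approximated by the anchor nets
`n ↦ j n m (b m)` with `m ∈ N₀`, which are `j`-convergent by softness. If every sequence in `N` is
bounded above, one anchor lying beyond countably many thresholds is asymptotically equal to `b`.
Otherwise pick anchors `m_k` whose nets are `2⁻ᵏ`-close to each other and glue them along an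
increasing unbounded sequence of thresholds `c_k`, using at `n` the anchor of the largest `k` with
`c_k ≤ n`.
-/

open Filter Topology

section Sequences

lemma exists_mul_pow_half_lt (C : ℝ) {ε : ℝ} (hε : 0 < ε) : ∃ k : ℕ, C * (1 / 2) ^ k < ε := by
  have h : Tendsto (fun k : ℕ => C * (1 / 2 : ℝ) ^ k) atTop (𝓝 0) := by
    simpa using (tendsto_pow_atTop_nhds_zero_of_lt_one (r := (1 / 2 : ℝ)) (by norm_num)
      (by norm_num)).const_mul C
  exact (h.eventually_lt_const hε).exists

lemma exists_seq_of_forall_exists {α : Type*} {P : ℕ → α → Prop} {R : ℕ → α → α → Prop}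
    (h₀ : ∃ x, P 0 x) (h : ∀ k x, P k x → ∃ y, P (k + 1) y ∧ R k x y) :
    ∃ u : ℕ → α, ∀ k, P k (u k) ∧ R k (u k) (u (k + 1)) := by
  choose next hnext using h
  obtain ⟨x₀, hx₀⟩ := h₀
  let v : ∀ k, {x // P k x} := fun k =>
    Nat.rec ⟨x₀, hx₀⟩ (fun k x => ⟨next k x.1 x.2, (hnext k x.1 x.2).1⟩) k
  exact ⟨fun k => (v k).1, fun k => ⟨(v k).2, (hnext k _ (v k).2).2⟩⟩

lemma exists_greatest_index_le {ι : Type*} [Preorder ι] {c : ℕ → ι} (hc : Monotone c)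
    (hunb : ∀ n, ∃ k, ¬c k ≤ n) : ∃ κ : ι → ℕ, ∀ n k, c k ≤ n → k ≤ κ n ∧ c (κ n) ≤ n := by
  classical
  refine ⟨fun n => Nat.find (hunb n) - 1, fun n k hk => ?_⟩
  have hlt : k < Nat.find (hunb n) := by
    by_contra! hle
    exact Nat.find_spec (hunb n) ((hc hle).trans hk)
  dsimp only
  exact ⟨by omega, not_not.1 (Nat.find_min (hunb n) (by omega))⟩

end Sequences

section Limsup

variable {α β : Type*} {f : Filter α} {g : Filter β}

lemma tendsto_limsup_zero_of_forall_eventually [g.NeBot] {u : α → β → ℝ}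
    (h0 : ∀ m n, 0 ≤ u m n) (h : ∀ ε > 0, ∀ᶠ m in f, ∀ᶠ n in g, u m n < ε) :
    Tendsto (fun m => limsup (u m) g) f (𝓝 0) := by
  refine tendsto_order.2 ⟨fun a ha => ?_, fun a ha => ?_⟩
  · filter_upwards [h 1 one_pos] with m hm
    exact ha.trans_le <| le_limsup_of_frequently_le (.of_forall (h0 m))
      (isBoundedUnder_of_eventually_le (hm.mono fun _ => le_of_lt))
  · filter_upwards [h (a / 2) (half_pos ha)] with m hm
    exact (limsup_le_of_le (isCoboundedUnder_le_of_le g (h0 m))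
      (hm.mono fun _ => le_of_lt)).trans_lt (half_lt_self ha)

lemma eventually_eventually_lt_of_tendsto_limsup {u : α → β → ℝ}
    (hb : ∀ᶠ m in f, IsBoundedUnder (· ≤ ·) g (u m))
    (h : Tendsto (fun m => limsup (u m) g) f (𝓝 0)) {ε : ℝ} (hε : 0 < ε) :
    ∀ᶠ m in f, ∀ᶠ n in g, u m n < ε := by
  filter_upwards [h.eventually_lt_const hε, hb] with m h1 h2
  exact eventually_lt_of_limsup_lt h1 h2

lemma tendsto_zero_of_forall_eventually_le_mul_pow {u : α → ℝ} (h0 : ∀ x, 0 ≤ u x) (C : ℝ)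
    (h : ∀ k : ℕ, ∀ᶠ x in f, u x ≤ C * (1 / 2) ^ k) : Tendsto u f (𝓝 0) := by
  refine tendsto_order.2 ⟨fun a ha => .of_forall fun x => ha.trans_le (h0 x), fun a ha => ?_⟩
  obtain ⟨k, hk⟩ := exists_mul_pow_half_lt C ha
  exact (h k).mono fun x hx => hx.trans_lt hk

end Limsup

section Cofinal

variable {ι : Type*} [Preorder ι] {S : Set ι}

lemma IsCofinal.isDirected [IsDirected ι (· ≤ ·)] (hS : IsCofinal S) : IsDirected S (· ≤ ·) where
  directed a b := by
    obtain ⟨c, hac, hbc⟩ := exists_ge_ge (a : ι) b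
    obtain ⟨m, hm, hcm⟩ := hS c
    exact ⟨⟨m, hm⟩, hac.trans hcm, hbc.trans hcm⟩

lemma IsCofinal.tendsto_val_atTop (hS : IsCofinal S) : Tendsto ((↑) : S → ι) atTop atTop :=
  tendsto_atTop_atTop_of_monotone (fun _ _ h => h) fun n =>
    let ⟨m, hm, hnm⟩ := hS n
    ⟨⟨m, hm⟩, hnm⟩

end Cofinal

section lp

variable {ι : Type*} {E : ι → Type*} [∀ n, NormedAddCommGroup (E n)]

lemma lp.exists_eventually_eq_norm_le {l : Filter ι} [l.NeBot] {a : ∀ n, E n} {B : ℝ}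
    (h : ∀ᶠ n in l, ‖a n‖ ≤ B) : ∃ a' : lp E ⊤, (∀ᶠ n in l, a' n = a n) ∧ ‖a'‖ ≤ B := by
  classical
  have hB : 0 ≤ B := let ⟨n, hn⟩ := h.exists; (norm_nonneg _).trans hn
  have hle : ∀ n, ‖if ‖a n‖ ≤ B then a n else 0‖ ≤ B := fun n => by
    split_ifs with hn
    · exact hn
    · simpa using hB
  refine ⟨⟨fun n => if ‖a n‖ ≤ B then a n else 0, memℓp_infty ⟨B, ?_⟩⟩, ?_,
    lp.norm_le_of_forall_le hB hle⟩
  · rintro _ ⟨n, rfl⟩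
    exact hle n
  · filter_upwards [h] with n hn
    exact if_pos hn

variable {𝕜 : Type*} [NormedField 𝕜] [∀ n, NormedSpace 𝕜 (E n)]

def lpRestrict (S : Set ι) : lp E ⊤ →ₗ[𝕜] lp (fun n : S => E n) ⊤ where
  toFun f := ⟨fun n => f n, memℓp_infty ⟨‖f‖, by
    rintro _ ⟨n, rfl⟩
    exact lp.norm_apply_le_norm ENNReal.top_ne_zero f n⟩⟩
  map_add' _ _ := rfl
  map_smul' _ _ := rfl

end lp

lemma Submodule.exists_quotEquiv_of_comap_eq {R M N : Type*} [Ring R] [AddCommGroup M]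
    [AddCommGroup N] [Module R M] [Module R N] {p : Submodule R M} {q : Submodule R N}
    (f : M →ₗ[R] N) (hp : q.comap f = p) (hf : ∀ y, ∃ x, f x - y ∈ q) :
    ∃ ψ : (M ⧸ p) ≃ₗ[R] N ⧸ q, ∀ x, ψ (Submodule.Quotient.mk x) = Submodule.Quotient.mk (f x) := by
  let φ := q.mkQ ∘ₗ f
  have hφ : Function.Surjective φ := fun y => by
    obtain ⟨y, rfl⟩ := Submodule.Quotient.mk_surjective q y
    obtain ⟨x, hx⟩ := hf y
    exact ⟨x, (Submodule.Quotient.eq q).2 hx⟩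
  have hker : p = LinearMap.ker φ := by
    rw [← hp, LinearMap.ker_comp, Submodule.ker_mkQ]
  exact ⟨(Submodule.quotEquivOfEq p _ hker).trans (φ.quotKerEquivOfSurjective hφ), fun _ => rfl⟩

section NullNet

variable {ι : Type*} [Preorder ι] {E : ι → Type*} [∀ n, NormedAddCommGroup (E n)] {a b : ∀ n, E n}

lemma IsNullNet.congr' (ha : IsNullNet a) (hab : ∀ᶠ n in atTop, a n = b n) : IsNullNet b :=
  Tendsto.congr' (hab.mono fun _ hn => by rw [hn]) ha

lemma isNullNet_of_eventually_eq_zero (ha : ∀ᶠ n in atTop, a n = 0) : IsNullNet a :=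
  tendsto_const_nhds.congr' (ha.mono fun _ hn => by simp [hn])

end NullNet

section JConv

variable {ι : Type*} [Preorder ι] {E : ι → Type*} [∀ n, NormedAddCommGroup (E n)]
  [∀ n, NormedSpace ℂ (E n)] {j : ∀ n m, E m →L[ℂ] E n} {a b : ∀ n, E n}

lemma norm_map_le_of_contractive (hj : ∀ n m, m ≤ n → ‖j n m‖ ≤ 1) {m n : ι} (h : m ≤ n)
    (x : E m) : ‖j n m x‖ ≤ ‖x‖ := by
  simpa using (j n m).le_of_opNorm_le (hj n m h) x

lemma eventually_norm_map_le (hj : ∀ n m, m ≤ n → ‖j n m‖ ≤ 1) {l : ι} (x : E l) :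
    ∀ᶠ n in atTop, ‖j n l x‖ ≤ ‖x‖ :=
  (eventually_ge_atTop l).mono fun _ hn => norm_map_le_of_contractive hj hn x

lemma IsSoftSystem.jConv (hj : IsSoftSystem j) (l : ι) (x : E l) : JConv j fun n => j n l x :=
  hj.2 l x

lemma JConv.congr' (ha : JConv j a) (hab : ∀ᶠ n in atTop, a n = b n) : JConv j b := by
  refine Tendsto.congr' ?_ ha
  filter_upwards [hab] with m hm
  refine limsup_congr ?_
  filter_upwards [hab] with n hn
  rw [hn, hm]

lemma JConv.eventually_lt (hj : ∀ n m, m ≤ n → ‖j n m‖ ≤ 1) {B : ℝ}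
    (hB : ∀ᶠ n in atTop, ‖a n‖ ≤ B) (ha : JConv j a) {ε : ℝ} (hε : 0 < ε) :
    ∀ᶠ m in atTop, ∀ᶠ n in atTop, ‖a n - j n m (a m)‖ < ε := by
  refine eventually_eventually_lt_of_tendsto_limsup (.of_forall fun m => ?_) ha hε
  refine isBoundedUnder_of_eventually_le (a := B + ‖a m‖) ?_
  filter_upwards [hB, eventually_norm_map_le hj (a m)] with n hn hmn
  exact (norm_sub_le _ _).trans (add_le_add hn hmn)

lemma IsSoftSystem.eventually_norm_sub_lt (hj : IsSoftSystem j) {l : ι} (x : E l) {ε : ℝ}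
    (hε : 0 < ε) :
    ∀ᶠ m in atTop, ∀ y : E m, ∀ᶠ n in atTop, ‖j n m y - j n l x‖ < ‖y - j m l x‖ + ε := by
  filter_upwards [(hj.jConv l x).eventually_lt hj.1 (eventually_norm_map_le hj.1 x) hε]
    with m hm y
  filter_upwards [hm, eventually_ge_atTop m] with n hn hmn
  calc ‖j n m y - j n l x‖ = ‖j n m (y - j m l x) - (j n l x - j n m (j m l x))‖ := by
        rw [map_sub]; congr 1; abel
    _ ≤ ‖j n m (y - j m l x)‖ + ‖j n l x - j n m (j m l x)‖ := norm_sub_le _ _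
    _ < ‖y - j m l x‖ + ε := add_lt_add_of_le_of_lt (norm_map_le_of_contractive hj.1 hmn _) hn

variable [Nonempty ι] [IsDirected ι (· ≤ ·)]

lemma jConv_of_forall_eventually
    (h : ∀ ε > 0, ∀ᶠ m in atTop, ∀ᶠ n in atTop, ‖a n - j n m (a m)‖ < ε) : JConv j a :=
  tendsto_limsup_zero_of_forall_eventually (fun _ _ => norm_nonneg _) h

lemma jConv_of_eventually_eq_zero (ha : ∀ᶠ n in atTop, a n = 0) : JConv j a :=
  jConv_of_forall_eventually fun ε hε => by
    filter_upwards [ha] with m hm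
    filter_upwards [ha] with n hn
    simpa [hm, hn] using hε

lemma JConv.tendsto_norm (hj : ∀ n m, m ≤ n → ‖j n m‖ ≤ 1) {B : ℝ}
    (hB : ∀ᶠ n in atTop, ‖a n‖ ≤ B) (ha : JConv j a) :
    Tendsto (fun n => ‖a n‖) atTop (𝓝 (limsup (fun n => ‖a n‖) atTop)) := by
  set L := limsup (fun n => ‖a n‖) atTop
  have hL : ∀ ε > 0, ∀ᶠ m in atTop, L ≤ ‖a m‖ + ε := fun ε hε => by
    filter_upwards [ha.eventually_lt hj hB hε] with m hm
    refine limsup_le_of_le (isCoboundedUnder_le_of_le _ fun n => norm_nonneg _) ?_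
    filter_upwards [hm, eventually_norm_map_le hj (a m)] with n hn hmn
    calc ‖a n‖ ≤ ‖j n m (a m)‖ + ‖a n - j n m (a m)‖ := norm_le_norm_add_norm_sub' _ _
      _ ≤ ‖a m‖ + ε := add_le_add hmn hn.le
  refine tendsto_order.2 ⟨fun c hc => ?_,
    fun c hc => eventually_lt_of_limsup_lt hc (isBoundedUnder_of_eventually_le hB)⟩
  filter_upwards [hL _ (half_pos (sub_pos.2 hc))] with m hm
  linarith

section Restrict

variable {S : Set ι}

lemma JConv.restrict (hS : IsCofinal S) (hj : ∀ n m, m ≤ n → ‖j n m‖ ≤ 1) {B : ℝ}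
    (hB : ∀ᶠ n in atTop, ‖a n‖ ≤ B) (ha : JConv j a) :
    JConv (fun n m : S => j n m) fun n : S => a n := by
  have := hS.nonempty.to_subtype
  have := hS.isDirected
  refine jConv_of_forall_eventually fun ε hε => ?_
  filter_upwards [hS.tendsto_val_atTop.eventually (ha.eventually_lt hj hB hε)] with m hm
  exact hS.tendsto_val_atTop.eventually hm

lemma IsSoftSystem.restrict (hS : IsCofinal S) (hj : IsSoftSystem j) :
    IsSoftSystem fun n m : S => j n m :=
  ⟨fun n m h => hj.1 n m h, fun l x => JConv.restrict (a := fun n => j n l x) hS hj.1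
    (eventually_norm_map_le hj.1 x) (hj.jConv l x)⟩

lemma JConv.limsup_norm_restrict (hS : IsCofinal S) (hj : ∀ n m, m ≤ n → ‖j n m‖ ≤ 1) {B : ℝ}
    (hB : ∀ᶠ n in atTop, ‖a n‖ ≤ B) (ha : JConv j a) :
    limsup (fun n : S => ‖a n‖) atTop = limsup (fun n => ‖a n‖) atTop := by
  have := hS.nonempty.to_subtype
  have := hS.isDirected
  exact ((ha.tendsto_norm hj hB).comp hS.tendsto_val_atTop).limsup_eq

lemma JConv.isNullNet_of_restrict (hS : IsCofinal S) (hj : ∀ n m, m ≤ n → ‖j n m‖ ≤ 1)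
    {B : ℝ} (hB : ∀ᶠ n in atTop, ‖a n‖ ≤ B) (ha : JConv j a)
    (h0 : IsNullNet fun n : S => a n) : IsNullNet a := by
  have := hS.nonempty.to_subtype
  have := hS.isDirected
  have hlim := ha.tendsto_norm hj hB
  rwa [tendsto_nhds_unique (hlim.comp hS.tendsto_val_atTop) h0] at hlim

end Restrict

end JConv

section LimitSpace

variable {ι : Type*} [Preorder ι] [Nonempty ι] [IsDirected ι (· ≤ ·)] {E : ι → Type*}
  [∀ n, NormedAddCommGroup (E n)]

lemma limsup_norm_le_of_isNullNet_sub {x y : lp E ⊤} (h : IsNullNet ⇑(x - y)) :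
    limsup (fun n => ‖x n‖) atTop ≤ ‖y‖ := by
  refine le_of_forall_pos_le_add fun ε hε =>
    limsup_le_of_le (isCoboundedUnder_le_of_le _ fun n => norm_nonneg _) ?_
  filter_upwards [h.eventually_lt_const hε] with n hn
  calc ‖x n‖ ≤ ‖y n‖ + ‖x n - y n‖ := norm_le_norm_add_norm_sub' _ _
    _ ≤ ‖y‖ + ε := add_le_add (lp.norm_apply_le_norm ENNReal.top_ne_zero y n) hn.le

variable [∀ n, NormedSpace ℂ (E n)] {j : ∀ n m, E m →L[ℂ] E n}

lemma norm_mk_eq_limsup {C C₀ : Submodule ℂ (lp E ⊤)}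
    (hC : (C : Set (lp E ⊤)) = {f : lp E ⊤ | JConv j ⇑f})
    (hC₀ : (C₀ : Set (lp E ⊤)) = {f : lp E ⊤ | IsNullNet ⇑f})
    (x : C) : ‖(Submodule.Quotient.mk x : C ⧸ C₀.comap C.subtype)‖
      = limsup (fun n => ‖(x : lp E ⊤) n‖) atTop := by
  have mem₀ : ∀ y : C, y ∈ C₀.comap C.subtype ↔ IsNullNet ⇑(y : lp E ⊤) :=
    fun y => Set.ext_iff.1 hC₀ y
  refine le_antisymm (le_of_forall_pos_le_add fun ε hε => ?_)
    (le_of_forall_pos_le_add fun ε hε => ?_)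
  · have hL : ∀ᶠ n in atTop, ‖(x : lp E ⊤) n‖ ≤ limsup (fun n => ‖(x : lp E ⊤) n‖) atTop + ε :=
      (eventually_lt_of_limsup_lt (lt_add_of_pos_right _ hε) (isBoundedUnder_of_eventually_le
        (.of_forall (lp.norm_apply_le_norm ENNReal.top_ne_zero (x : lp E ⊤))))).mono
        fun _ => le_of_lt
    -- zeroing the coordinates with `‖x n‖ > limsup + ε` changes `x` by an eventually zero net
    obtain ⟨w, hwx, hw⟩ := lp.exists_eventually_eq_norm_le hL
    have hzero : ∀ᶠ n in atTop, ((x : lp E ⊤) - w) n = 0 :=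
      hwx.mono fun n hn => by simp [hn]
    have hwC : w ∈ C := by
      have h := C.sub_mem x.2 ((Set.ext_iff.1 hC _).2 (jConv_of_eventually_eq_zero hzero))
      rwa [sub_sub_cancel] at h
    calc ‖(Submodule.Quotient.mk x : C ⧸ C₀.comap C.subtype)‖
        = ‖(Submodule.Quotient.mk ⟨w, hwC⟩ : C ⧸ C₀.comap C.subtype)‖ := by
          rw [(Submodule.Quotient.eq _).2
            ((mem₀ (x - ⟨w, hwC⟩)).2 (isNullNet_of_eventually_eq_zero hzero))]
      _ ≤ ‖w‖ := Submodule.Quotient.norm_mk_le _ _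
      _ ≤ _ := hw
  · obtain ⟨y, hy, hlt⟩ :=
      Submodule.Quotient.norm_mk_lt (Submodule.Quotient.mk x : C ⧸ C₀.comap C.subtype) hε
    exact (limsup_norm_le_of_isNullNet_sub
      ((mem₀ _).1 ((Submodule.Quotient.eq _).1 hy.symm))).trans hlt.le

end LimitSpace

section Extension

variable {ι : Type*} [Preorder ι] [Nonempty ι] [IsDirected ι (· ≤ ·)] {E : ι → Type*}
  [∀ n, NormedAddCommGroup (E n)] [∀ n, NormedSpace ℂ (E n)] {j : ∀ n m, E m →L[ℂ] E n}
  {S : Set ι}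

lemma exists_isNullNet_of_bddAbove (hS : IsCofinal S)
    (hbdd : ∀ u : ℕ → ι, BddAbove (Set.range u)) {b : ∀ n : S, E n}
    (hb : ∀ ε > 0, ∀ᶠ m : S in atTop, ∀ᶠ n : S in atTop, ‖b n - j n m (b m)‖ < ε) :
    ∃ q : S, IsNullNet fun n : S => j n q (b q) - b n := by
  have := hS.nonempty.to_subtype
  have := hS.isDirected
  choose t ht using fun k : ℕ => eventually_atTop.1 (hb ((1 / 2) ^ k) (by positivity))
  obtain ⟨v, hv⟩ := hbdd fun k => (t k : ι)
  obtain ⟨q, hq, hvq⟩ := hS v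
  refine ⟨⟨q, hq⟩, tendsto_zero_of_forall_eventually_le_mul_pow (fun _ => norm_nonneg _) 1
    fun k => ?_⟩
  filter_upwards [ht k ⟨q, hq⟩ ((hv ⟨k, rfl⟩).trans hvq)] with n hn
  rw [norm_sub_rev, one_mul]
  exact hn.le

lemma IsSoftSystem.exists_seq_anchor (hS : IsCofinal S) (hj : IsSoftSystem j)
    (b : ∀ n : S, E n)
    (hb : ∀ ε > 0, ∀ᶠ m : S in atTop, ∀ᶠ n : S in atTop, ‖b n - j n m (b m)‖ < ε) :
    ∃ m : ℕ → S, ∀ k, (∀ᶠ n in atTop, ‖b n - j n (m k) (b (m k))‖ < (1 / 2) ^ (k + 1)) ∧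
      ∀ᶠ n in atTop, ‖j n (m (k + 1)) (b (m (k + 1))) - j n (m k) (b (m k))‖ < (1 / 2) ^ k := by
  have := hS.nonempty.to_subtype
  have := hS.isDirected
  refine exists_seq_of_forall_exists
    (P := fun k (m : S) => ∀ᶠ n : S in atTop, ‖b n - j n m (b m)‖ < (1 / 2) ^ (k + 1))
    (R := fun k (m m' : S) => ∀ᶠ n in atTop, ‖j n m' (b m') - j n m (b m)‖ < (1 / 2) ^ k)
    (hb _ (by norm_num)).exists fun k m hm => ?_
  have hsoft := hS.tendsto_val_atTop.eventually
    (hj.eventually_norm_sub_lt (b m) (ε := (1 / 2) ^ (k + 1)) (by positivity))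
  obtain ⟨m', hm', hsoft', hclose⟩ :=
    ((hb ((1 / 2) ^ (k + 1 + 1)) (by positivity)).and (hsoft.and hm)).exists
  refine ⟨m', hm', ?_⟩
  filter_upwards [hsoft' (b m')] with n hn
  calc _ < ‖b m' - j m' m (b m)‖ + (1 / 2) ^ (k + 1) := hn
    _ < (1 / 2) ^ (k + 1) + (1 / 2) ^ (k + 1) := by gcongr
    _ = (1 / 2) ^ k := by ring

theorem exists_jConv_limit_of_not_bddAbove (hj : ∀ n m, m ≤ n → ‖j n m‖ ≤ 1) {d : ℕ → ι}
    (hd : ¬BddAbove (Set.range d)) (x : ℕ → ∀ n, E n) {B : ℝ}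
    (hB : ∀ k, ∀ᶠ n in atTop, ‖x k n‖ ≤ B) (hx : ∀ k, JConv j (x k))
    (hclose : ∀ k, ∀ᶠ n in atTop, ‖x (k + 1) n - x k n‖ ≤ (1 / 2) ^ k) :
    ∃ y : ∀ n, E n, (∀ᶠ n in atTop, ‖y n‖ ≤ B) ∧ JConv j y ∧
      ∀ k, ∀ᶠ n in atTop, ‖y n - x k n‖ ≤ 2 * (1 / 2) ^ k := by
  let IsThreshold : ℕ → ι → Prop := fun k c => d k ≤ c ∧ ∀ n, c ≤ n →
    ‖x k n‖ ≤ B ∧ ‖x (k + 1) n - x k n‖ ≤ (1 / 2) ^ k ∧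
      ∀ᶠ n' in atTop, ‖x k n' - j n' n (x k n)‖ < (1 / 2) ^ k
  have hthreshold : ∀ k, ∀ᶠ c in atTop, IsThreshold k c := fun k =>
    (eventually_ge_atTop (d k)).and <| eventually_forall_ge_atTop.2 <|
      (hB k).and <| (hclose k).and <| (hx k).eventually_lt hj (hB k) (by positivity)
  obtain ⟨c, hc⟩ := exists_seq_of_forall_exists (P := IsThreshold) (R := fun _ c c' => c ≤ c')
    (hthreshold 0).exists fun k c _ => ((hthreshold (k + 1)).and (eventually_ge_atTop c)).exists
  have hmono : Monotone c := monotone_nat_of_le_succ fun k => (hc k).2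
  obtain ⟨κ, hκ⟩ := exists_greatest_index_le hmono fun n => by
    obtain ⟨_, ⟨k, rfl⟩, hk⟩ := not_bddAbove_iff'.1 hd n
    exact ⟨k, fun h => hk ((hc k).1.1.trans h)⟩
  have htele : ∀ k K, k ≤ K → ∀ n, c K ≤ n →
      ‖x K n - x k n‖ ≤ 2 * (1 / 2) ^ k - 2 * (1 / 2) ^ K := by
    intro k K hkK
    induction K, hkK using Nat.le_induction with
    | base => intro n _; simp
    | succ K hkK ih =>
      intro n hn
      have hKn : c K ≤ n := (hmono K.le_succ).trans hn
      calc ‖x (K + 1) n - x k n‖ ≤ ‖x (K + 1) n - x K n‖ + ‖x K n - x k n‖ :=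
            norm_sub_le_norm_sub_add_norm_sub _ _ _
        _ ≤ (1 / 2) ^ K + (2 * (1 / 2) ^ k - 2 * (1 / 2) ^ K) :=
            add_le_add ((hc K).1.2 n hKn).2.1 (ih n hKn)
        _ = 2 * (1 / 2) ^ k - 2 * (1 / 2) ^ (K + 1) := by ring
  have hyx : ∀ k n, c k ≤ n → ‖x (κ n) n - x k n‖ ≤ 2 * (1 / 2) ^ k := fun k n hn => by
    have := htele k (κ n) (hκ n k hn).1 n (hκ n k hn).2
    have : (0 : ℝ) ≤ (1 / 2) ^ κ n := by positivity
    linarith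
  refine ⟨fun n => x (κ n) n, ?_, jConv_of_forall_eventually fun ε hε => ?_,
    fun k => (eventually_ge_atTop (c k)).mono (hyx k)⟩
  · filter_upwards [eventually_ge_atTop (c 0)] with n hn
    exact ((hc (κ n)).1.2 n (hκ n 0 hn).2).1
  · obtain ⟨k₀, hk₀⟩ := exists_mul_pow_half_lt 3 hε
    filter_upwards [eventually_ge_atTop (c k₀)] with m hm
    obtain ⟨hk₀m, hcm⟩ := hκ m k₀ hm
    filter_upwards [((hc (κ m)).1.2 m hcm).2.2, eventually_ge_atTop m] with n hn hmn
    calc ‖x (κ n) n - j n m (x (κ m) m)‖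
        ≤ ‖x (κ n) n - x (κ m) n‖ + ‖x (κ m) n - j n m (x (κ m) m)‖ :=
          norm_sub_le_norm_sub_add_norm_sub _ _ _
      _ ≤ 2 * (1 / 2) ^ κ m + (1 / 2) ^ κ m := add_le_add (hyx _ n (hcm.trans hmn)) hn.le
      _ ≤ 3 * (1 / 2) ^ k₀ := by
          have := pow_le_pow_of_le_one (by norm_num : (0 : ℝ) ≤ 1 / 2) (by norm_num) hk₀m
          linarith
      _ < ε := hk₀

theorem IsSoftSystem.exists_jConv_extension (hS : IsCofinal S) (hj : IsSoftSystem j)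
    (b : lp (fun n : S => E n) ⊤) (hb : JConv (fun n m : S => j n m) ⇑b) :
    ∃ a : lp E ⊤, JConv j ⇑a ∧ IsNullNet fun n : S => a n - b n := by
  have := hS.nonempty.to_subtype
  have := hS.isDirected
  have hbε : ∀ ε > 0, ∀ᶠ m : S in atTop, ∀ᶠ n : S in atTop, ‖b n - j n m (b m)‖ < ε :=
    fun ε hε => hb.eventually_lt (fun (n m : S) h => hj.1 n m h)
      (.of_forall (lp.norm_apply_le_norm ENNReal.top_ne_zero b)) hε
  have hanchor : ∀ m : S, ∀ᶠ n in atTop, ‖j n m (b m)‖ ≤ ‖b‖ := fun m =>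
    (eventually_norm_map_le hj.1 (b m)).mono fun n hn =>
      hn.trans (lp.norm_apply_le_norm ENNReal.top_ne_zero b m)
  suffices ∃ a : ∀ n, E n, (∀ᶠ n in atTop, ‖a n‖ ≤ ‖b‖) ∧ JConv j a ∧
      IsNullNet fun n : S => a n - b n by
    obtain ⟨a, haB, ha, hab⟩ := this
    obtain ⟨a', ha', -⟩ := lp.exists_eventually_eq_norm_le haB
    exact ⟨a', ha.congr' (ha'.mono fun n hn => hn.symm),
      hab.congr' ((hS.tendsto_val_atTop.eventually ha').mono fun n hn => by rw [hn])⟩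
  by_cases hbdd : ∀ u : ℕ → ι, BddAbove (Set.range u)
  · obtain ⟨q, hq⟩ := exists_isNullNet_of_bddAbove hS hbdd hbε
    exact ⟨_, hanchor q, hj.jConv q (b q), hq⟩
  obtain ⟨d, hd⟩ := not_forall.1 hbdd
  obtain ⟨m, hm⟩ := hj.exists_seq_anchor hS b hbε
  obtain ⟨y, hyB, hy, hyx⟩ := exists_jConv_limit_of_not_bddAbove hj.1 hd
    (fun k n => j n (m k) (b (m k))) (fun k => hanchor (m k)) (fun k => hj.jConv _ _)
    fun k => (hm k).2.mono fun _ => le_of_lt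
  refine ⟨y, hyB, hy, tendsto_zero_of_forall_eventually_le_mul_pow (fun _ => norm_nonneg _) 3
    fun k => ?_⟩
  filter_upwards [hS.tendsto_val_atTop.eventually (hyx k), (hm k).1] with n h1 h2
  calc ‖y n - b n‖ ≤ ‖y n - j n (m k) (b (m k))‖ + ‖b n - j n (m k) (b (m k))‖ := by
        rw [norm_sub_rev (b n)]; exact norm_sub_le_norm_sub_add_norm_sub _ _ _
    _ ≤ 2 * (1 / 2) ^ k + (1 / 2) ^ (k + 1) := add_le_add h1 h2.le
    _ ≤ 3 * (1 / 2) ^ k := by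
        have : (0 : ℝ) ≤ (1 / 2) ^ k := by positivity
        rw [pow_succ]; linarith

end Extension

/-- Restricting a soft inductive system of normed spaces to a cofinal subset
`N₀` of the index set gives again a soft inductive system, whose limit space is isometrically
isomorphic to the limit space of the original system. -/
theorem stmt6 {ι : Type*} [Preorder ι] [Nonempty ι] [IsDirected ι (· ≤ ·)]
    {E : ι → Type*} [∀ n, NormedAddCommGroup (E n)] [∀ n, NormedSpace ℂ (E n)]
    (j : ∀ n m, E m →L[ℂ] E n) (hj : IsSoftSystem j)
    (N₀ : Set ι) (hcof : ∀ n : ι, ∃ m ∈ N₀, n ≤ m)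
    (C : Submodule ℂ (lp E ⊤)) (C₀ : Submodule ℂ (lp E ⊤))
    (hC : (C : Set (lp E ⊤)) = {f : lp E ⊤ | JConv j (fun n => f n)})
    (hC₀ : (C₀ : Set (lp E ⊤)) = {f : lp E ⊤ | IsNullNet (fun n => f n)})
    (D : Submodule ℂ (lp (fun n : N₀ => E n.1) ⊤))
    (D₀ : Submodule ℂ (lp (fun n : N₀ => E n.1) ⊤))
    (hD : (D : Set (lp (fun n : N₀ => E n.1) ⊤))
      = {f | JConv (fun (n m : N₀) => j n.1 m.1) (fun n => f n)})
    (hD₀ : (D₀ : Set (lp (fun n : N₀ => E n.1) ⊤)) = {f | IsNullNet (fun n => f n)}) :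
    IsSoftSystem (fun (n m : N₀) => j n.1 m.1) ∧
    ∃ ψ : (C ⧸ (C₀.comap C.subtype)) ≃ₗ[ℂ] (D ⧸ (D₀.comap D.subtype)),
      (∀ x, ‖ψ x‖ = ‖x‖) ∧
      ∀ (a : C) (b : D),
        (∀ n : N₀, (b : lp (fun n : N₀ => E n.1) ⊤) n = (a : lp E ⊤) n.1) →
        ψ (Submodule.Quotient.mk a) = Submodule.Quotient.mk b := by
  have hS : IsCofinal N₀ := hcof
  have := hS.nonempty.to_subtype
  have := hS.isDirected
  have memC : ∀ f, f ∈ C ↔ JConv j ⇑f := fun f => Set.ext_iff.1 hC f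
  have memC₀ : ∀ f, f ∈ C₀ ↔ IsNullNet ⇑f := fun f => Set.ext_iff.1 hC₀ f
  have memD : ∀ f, f ∈ D ↔ JConv (fun n m : N₀ => j n m) ⇑f := fun f => Set.ext_iff.1 hD f
  have memD₀ : ∀ f, f ∈ D₀ ↔ IsNullNet ⇑f := fun f => Set.ext_iff.1 hD₀ f
  have hbdd : ∀ f : lp E ⊤, ∀ᶠ n in atTop, ‖f n‖ ≤ ‖f‖ :=
    fun f => .of_forall (lp.norm_apply_le_norm ENNReal.top_ne_zero f)
  let f : C →ₗ[ℂ] D := (lpRestrict N₀ ∘ₗ C.subtype).codRestrict D fun x =>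
    (memD _).2 (((memC _).1 x.2).restrict hS hj.1 (hbdd x))
  have hker : (D₀.comap D.subtype).comap f = C₀.comap C.subtype := Submodule.ext fun x =>
    ⟨fun h => (memC₀ _).2 (((memC _).1 x.2).isNullNet_of_restrict hS hj.1 (hbdd x)
      ((memD₀ _).1 h)), fun h => (memD₀ _).2 (((memC₀ _).1 h).comp hS.tendsto_val_atTop)⟩
  have hsurj : ∀ b, ∃ a, f a - b ∈ D₀.comap D.subtype := fun b => by
    obtain ⟨a, ha, hab⟩ := hj.exists_jConv_extension hS b ((memD _).1 b.2)
    exact ⟨⟨a, (memC a).2 ha⟩, (memD₀ _).2 hab⟩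
  obtain ⟨ψ, hψ⟩ := Submodule.exists_quotEquiv_of_comap_eq f hker hsurj
  refine ⟨hj.restrict hS, ψ, fun x => ?_, fun a b hab => ?_⟩
  · obtain ⟨x, rfl⟩ := Submodule.Quotient.mk_surjective _ x
    rw [hψ, norm_mk_eq_limsup hD hD₀, norm_mk_eq_limsup hC hC₀]
    exact ((memC _).1 x.2).limsup_norm_restrict hS hj.1 (hbdd x)
  · rw [hψ]
    congr 1
    exact Subtype.ext (lp.ext (funext fun n => (hab n).symm))
end

section
/- Universal property of the soft inductive limit of normed spaces: Let (E, j) be a soft inductive system of normed spaces with limit space E_∞ and canonical map j-lim. If α_n : E_n → F is a net of linear contractions into a Banach space F such that for every j-convergent net (a_n) the net (α_n(a_n)) is Cauchy in F, then there exists a unique linear contraction α_∞ : E_∞ → F with α_∞(j-lim_n a_n) = lim_n α_n(a_n) for all j-convergent nets (a_n). -/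
open Filter Topology

/-! For `a ∈ C(E,j)` the Cauchy net `α n (a n)` converges in `F`; its limit is linear in
`a`, bounded by `‖a‖ = sup_n ‖a n‖`, and zero on null nets since the `α n` are uniformly
bounded.
So the limit map is a contraction on `C(E,j)` vanishing on `C₀(E)`, and it descends to the
quotient `E_∞`, uniquely because the quotient map is surjective. -/

section LimitMaps

variable {𝕜 V F : Type*} [NontriviallyNormedField 𝕜]
  [SeminormedAddCommGroup V] [NormedSpace 𝕜 V] [NormedAddCommGroup F] [NormedSpace 𝕜 F]

theorem exists_continuousLinearMap_tendsto_of_bounded {α : Type*} {l : Filter α} [l.NeBot]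
    {T : α → V →ₗ[𝕜] F} {c : ℝ} (hc : 0 ≤ c)
    (hT : ∀ n v, ‖T n v‖ ≤ c * ‖v‖)
    (hlim : ∀ v, ∃ w, Tendsto (fun n => T n v) l (𝓝 w)) :
    ∃ L : V →L[𝕜] F, ‖L‖ ≤ c ∧ ∀ v, Tendsto (fun n => T n v) l (𝓝 (L v)) := by
  choose g hg using hlim
  let g' : V →ₗ[𝕜] F := linearMapOfTendsto g T (tendsto_pi_nhds.2 hg)
  have hbound : ∀ v, ‖g' v‖ ≤ c * ‖v‖ := fun v =>
    le_of_tendsto' (hg v).norm fun n => hT n v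
  exact ⟨g'.mkContinuous c hbound, LinearMap.mkContinuous_norm_le _ hc _, hg⟩

theorem Submodule.norm_liftQL_le (S : Submodule 𝕜 V) (f : V →L[𝕜] F) (hf : S ≤ f.ker) :
    ‖S.liftQL f hf‖ ≤ ‖f‖ := by
  let g : NormedAddGroupHom V F :=
    f.toLinearMap.toAddMonoidHom.mkNormedAddGroupHom ‖f‖ f.le_opNorm
  refine ContinuousLinearMap.opNorm_le_bound _ (norm_nonneg f) fun x => ?_
  calc ‖S.liftQL f hf x‖ ≤ ‖g‖ * ‖x‖ :=
        QuotientAddGroup.norm_lift_apply_le (S := S.toAddSubgroup) g (fun _ hs => hf hs) x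
    _ ≤ ‖f‖ * ‖x‖ := by
        gcongr
        exact AddMonoidHom.mkNormedAddGroupHom_norm_le _ (norm_nonneg f) _

end LimitMaps

theorem IsNullNet.tendsto_zero_apply {ι : Type*} [Preorder ι] {E : ι → Type*}
    [∀ n, NormedAddCommGroup (E n)] [∀ n, NormedSpace ℂ (E n)] {F : Type*}
    [NormedAddCommGroup F] [NormedSpace ℂ F] {a : ∀ n, E n} (ha : IsNullNet a)
    {α : ∀ n, E n →L[ℂ] F} {c : ℝ} (hα : ∀ n, ‖α n‖ ≤ c) :
    Tendsto (fun n => α n (a n)) atTop (𝓝 0) :=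
  squeeze_zero_norm (fun n => (α n).le_of_opNorm_le (hα n) _) (by simpa using ha.const_mul c)

theorem stmt7_general {ι : Type*} [Preorder ι] [Nonempty ι] [IsDirected ι (· ≤ ·)]
    {E : ι → Type*} [∀ n, NormedAddCommGroup (E n)] [∀ n, NormedSpace ℂ (E n)]
    (j : ∀ n m, E m →L[ℂ] E n)
    (C : Submodule ℂ (lp E ⊤)) (C₀ : Submodule ℂ (lp E ⊤))
    (hC : (C : Set (lp E ⊤)) = {f : lp E ⊤ | JConv j (fun n => f n)})
    (hC₀ : (C₀ : Set (lp E ⊤)) = {f : lp E ⊤ | IsNullNet (fun n => f n)})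
    {F : Type*} [NormedAddCommGroup F] [NormedSpace ℂ F] [CompleteSpace F]
    (α : ∀ n, E n →L[ℂ] F) (hα : ∀ n, ‖α n‖ ≤ 1)
    (hCauchy : ∀ f : lp E ⊤, JConv j (fun n => f n) →
      Cauchy (Filter.map (fun n => α n (f n)) atTop)) :
    ∃! αinf : (C ⧸ (C₀.comap C.subtype)) →L[ℂ] F,
      ‖αinf‖ ≤ 1 ∧
      ∀ a : C, Tendsto (fun n => α n ((a : lp E ⊤) n)) atTop
        (𝓝 (αinf (Submodule.Quotient.mk a))) := by
  have hmemC (a : C) : JConv j (fun n => (a : lp E ⊤) n) := (Set.ext_iff.mp hC a).mp a.2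
  obtain ⟨L, hL_norm, hL⟩ := exists_continuousLinearMap_tendsto_of_bounded
    (l := atTop) zero_le_one
    (T := fun n => (α n).toLinearMap ∘ₗ (lp.evalₗ E ⊤ n) ∘ₗ C.subtype)
    (fun n a => (α n).le_of_opNorm_le_of_le (hα n)
      (lp.norm_apply_le_norm ENNReal.top_ne_zero (a : lp E ⊤) n))
    (fun a => CompleteSpace.complete (hCauchy _ (hmemC a)))
  have hker : C₀.comap C.subtype ≤ L.ker := fun a ha =>
    have hnull : IsNullNet (fun n => (a : lp E ⊤) n) := (Set.ext_iff.mp hC₀ a).mp ha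
    tendsto_nhds_unique (hL a) (hnull.tendsto_zero_apply hα)
  refine ⟨(C₀.comap C.subtype).liftQL L hker,
    ⟨(Submodule.norm_liftQL_le _ L hker).trans hL_norm, hL⟩, ?_⟩
  rintro β ⟨-, hβ⟩
  ext x
  obtain ⟨a, rfl⟩ := Submodule.mkQ_surjective _ x
  exact tendsto_nhds_unique (hβ a) (hL a)

/-- **universal property.** If `α n : E n → F` are linear contractions into a
Banach space `F` mapping j-convergent nets to Cauchy nets, then there is a unique linear
contraction `α_∞` on the limit space `E_∞ = C(E,j)/C₀(E)` with
`α_∞ (j-lim a) = lim_n α n (a n)` for all j-convergent nets `a`. -/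
theorem stmt7 {ι : Type*} [Preorder ι] [Nonempty ι] [IsDirected ι (· ≤ ·)]
    {E : ι → Type*} [∀ n, NormedAddCommGroup (E n)] [∀ n, NormedSpace ℂ (E n)]
    (j : ∀ n m, E m →L[ℂ] E n) (hj : IsSoftSystem j)
    (C : Submodule ℂ (lp E ⊤)) (C₀ : Submodule ℂ (lp E ⊤))
    (hC : (C : Set (lp E ⊤)) = {f : lp E ⊤ | JConv j (fun n => f n)})
    (hC₀ : (C₀ : Set (lp E ⊤)) = {f : lp E ⊤ | IsNullNet (fun n => f n)})
    {F : Type*} [NormedAddCommGroup F] [NormedSpace ℂ F] [CompleteSpace F]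
    (α : ∀ n, E n →L[ℂ] F) (hα : ∀ n, ‖α n‖ ≤ 1)
    (hCauchy : ∀ f : lp E ⊤, JConv j (fun n => f n) →
      Cauchy (Filter.map (fun n => α n (f n)) atTop)) :
    ∃! αinf : (C ⧸ (C₀.comap C.subtype)) →L[ℂ] F,
      ‖αinf‖ ≤ 1 ∧
      ∀ a : C, Tendsto (fun n => α n ((a : lp E ⊤) n)) atTop
        (𝓝 (αinf (Submodule.Quotient.mk a))) :=
  stmt7_general j C C₀ hC hC₀ α hα hCauchy
end

section
/- Let (E, j) be a summably soft inductive system of vector spaces indexed by ℕ, i.e., there exists a decreasing sequence (ε_n) ∈ ℓ¹(ℕ) of nonnegative reals with ‖j_{nk} − j_{nm} ∘ j_{mk}‖ < ε_m for all n > m > k ≥ 0. Define the strict connecting maps ĵ_{nm} := j_{n,n−1} ∘ ⋯ ∘ j_{m+1,m} for n > m. Then for every ε > 0 there exists M such that for all n > m > M one has ‖ĵ_{nm} − j_{nm}‖ < ε. -/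
open Filter Topology

/-- Let `(E, j)` be a summably soft inductive system of normed spaces over
`ℕ`: the connecting maps are contractions and there is a decreasing summable sequence
`ε : ℕ → ℝ` of nonnegative reals with `‖j n k − j n m ∘ j m k‖ < ε m` for `n > m > k`.
If `jh` are the strict connecting maps `jh n m = j n (n−1) ∘ ⋯ ∘ j (m+1) m`, then for every
`δ > 0` there is `M` such that `‖jh n m − j n m‖ < δ` for all `n > m > M`. -/
theorem stmt8 {E : ℕ → Type*} [∀ n, NormedAddCommGroup (E n)] [∀ n, NormedSpace ℂ (E n)]
    (j : ∀ n m, E m →L[ℂ] E n) (hcontr : ∀ n m, m ≤ n → ‖j n m‖ ≤ 1)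
    (ε : ℕ → ℝ) (hpos : ∀ n, 0 ≤ ε n) (hdec : Antitone ε) (hsum : Summable ε)
    (hsummably : ∀ n m k, k < m → m < n → ‖j n k - (j n m).comp (j m k)‖ < ε m)
    (jh : ∀ n m, E m →L[ℂ] E n)
    (hjh₁ : ∀ m, jh (m + 1) m = j (m + 1) m)
    (hjh₂ : ∀ n m, m < n → jh (n + 1) m = (j (n + 1) n).comp (jh n m)) :
    ∀ δ > 0, ∃ M : ℕ, ∀ n m, M < m → m < n → ‖jh n m - j n m‖ < δ := by
  -- Key bound: ‖jh n m - j n m‖ ≤ ∑_{i ∈ [m+1, n)} ε i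
  have key : ∀ m n, m < n → ‖jh n m - j n m‖ ≤ ∑ i ∈ Finset.Ico (m + 1) n, ε i := by
    intro m n hmn
    induction n, hmn using Nat.le_induction with
    | base =>
      simp [hjh₁ m]
    | succ n hn ih =>
      have hmn : m < n := hn
      rw [hjh₂ n m hmn]
      have hsplit : (j (n + 1) n).comp (jh n m) - j (n + 1) m
          = (j (n + 1) n).comp (jh n m - j n m)
            + ((j (n + 1) n).comp (j n m) - j (n + 1) m) := by
        ext x; simp [map_sub]
      rw [hsplit]
      have h1 : ‖(j (n + 1) n).comp (jh n m - j n m)‖ ≤ ‖jh n m - j n m‖ := by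
        calc ‖(j (n + 1) n).comp (jh n m - j n m)‖
            ≤ ‖j (n + 1) n‖ * ‖jh n m - j n m‖ := ContinuousLinearMap.opNorm_comp_le _ _
          _ ≤ 1 * ‖jh n m - j n m‖ :=
              mul_le_mul_of_nonneg_right (hcontr (n + 1) n (Nat.le_succ n)) (norm_nonneg _)
          _ = ‖jh n m - j n m‖ := one_mul _
      have h2 : ‖(j (n + 1) n).comp (j n m) - j (n + 1) m‖ ≤ ε n := by
        rw [← norm_neg]
        have := hsummably (n + 1) n m hmn (Nat.lt_succ_self n)
        simpa [neg_sub] using this.le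
      have hsum_split : ∑ i ∈ Finset.Ico (m + 1) (n + 1), ε i
          = (∑ i ∈ Finset.Ico (m + 1) n, ε i) + ε n := by
        rw [Finset.sum_Ico_succ_top hn]
      rw [hsum_split]
      calc ‖_ + _‖ ≤ ‖(j (n + 1) n).comp (jh n m - j n m)‖
            + ‖(j (n + 1) n).comp (j n m) - j (n + 1) m‖ := norm_add_le _ _
        _ ≤ (∑ i ∈ Finset.Ico (m + 1) n, ε i) + ε n :=
            add_le_add (h1.trans ih) h2
  intro δ hδ
  -- tails of a summable sequence tend to 0
  have htail : Tendsto (fun i => ∑' k, ε (k + i)) atTop (𝓝 0) :=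
    tendsto_sum_nat_add ε
  have hev : ∀ᶠ i in atTop, (∑' k, ε (k + i)) < δ :=
    htail.eventually_lt_const hδ
  obtain ⟨M, hM⟩ := hev.exists_forall_of_atTop
  refine ⟨M, fun n m hMm hmn => ?_⟩
  have hsum' : Summable fun k => ε (k + (m + 1)) := (summable_nat_add_iff (m + 1)).mpr hsum
  have hle : ∑ i ∈ Finset.Ico (m + 1) n, ε i ≤ ∑' k, ε (k + (m + 1)) := by
    rw [Finset.sum_Ico_eq_sum_range]
    have := Summable.sum_le_tsum (Finset.range (n - (m + 1))) (fun i _ => hpos _) hsum'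
    simpa [add_comm] using this
  exact lt_of_le_of_lt ((key m n hmn).trans hle) (hM (m + 1) (Nat.le_of_lt (Nat.lt_succ_of_lt hMm)))
end

section
/- Let (S, j) be a strict inductive sequence of matrix algebras, i.e., S_n = M_{k_n} and j_{nm} j_{ml} = j_{nl} exactly for all n ≥ m ≥ l, with all j_{nm} ucp. Then the operator system C(S, j) of j-convergent sequences inside ∏_n M_{k_n} is nuclear: the compressions ψ_m : C(S,j) → ⊕_{i≤m} M_{k_i} and the maps φ_m : ⊕_{i≤m} M_{k_i} → C(S,j), (x_1,…,x_m) ↦ (x_1,…,x_m, j_{m+1,m}(x_m), j_{m+2,m}(x_m),…), are cpc, φ_m maps into C(S,j), and φ_m ∘ ψ_m → id pointwise in norm on C(S,j). -/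
open Filter Topology
open scoped Matrix.Norms.L2Operator ComplexOrder

/-- Positivity of a `μ × μ` matrix with entries in the matrix algebra `M_t(ℂ)`, i.e.
positive-semidefiniteness of the assembled `(μ·t) × (μ·t)` scalar matrix. -/
def BigPos {μ t : ℕ} (x : Fin μ → Fin μ → Matrix (Fin t) (Fin t) ℂ) : Prop :=
  (Matrix.of fun p q : Fin μ × Fin t => x p.1 q.1 p.2 q.2).PosSemidef

section Nets

variable {k : ℕ → ℕ}

/-- j-convergence of a sequence of matrices. -/
def JConvM (j : ∀ n m, Matrix (Fin (k m)) (Fin (k m)) ℂ →ₗ[ℂ] Matrix (Fin (k n)) (Fin (k n)) ℂ)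
    (f : ∀ n, Matrix (Fin (k n)) (Fin (k n)) ℂ) : Prop :=
  Tendsto (fun m => limsup (fun n => ‖f n - j n m (f m)‖) atTop) atTop (𝓝 0)

end Nets

/-! The maps `φ m` are built from the connecting maps alone, so complete positivity and
contractivity pass from `j` to `φ m`, and `φ m` lands in `C(S,j)` because its output is eventually
of the form `j n m (x m)`. For convergence, strictness `j n m ∘ j m m₀ = j n m₀` gives
`j n m (f m) - f n = j n m (f m - j m m₀ (f m₀)) - (f n - j n m₀ (f m₀))`, and both terms are small
once `m₀` is chosen by j-convergence of `f` and `m, n` are large. -/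

theorem lp.pi_norm_comp_le_norm {ι ι' : Type*} [Fintype ι'] {E : ι → Type*}
    [∀ i, NormedAddCommGroup (E i)] (σ : ι' → ι) (f : lp E ⊤) :
    ‖(fun i => f (σ i) : ∀ i, E (σ i))‖ ≤ ‖f‖ :=
  (pi_norm_le_iff_of_nonneg (norm_nonneg f)).2 fun i =>
    lp.norm_apply_le_norm ENNReal.top_ne_zero f (σ i)

local notation "𝕄" k:max n:max => Matrix (Fin (k n)) (Fin (k n)) ℂ

section StrictInductiveSequence

variable {k : ℕ → ℕ} (j : ∀ n m, 𝕄 k m →ₗ[ℂ] 𝕄 k n)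

theorem jConvM_of_forall_gt (hstrict : ∀ n m l, l ≤ m → m ≤ n → (j n m).comp (j m l) = j n l)
    {g : ∀ n, 𝕄 k n} {m : ℕ} (hg : ∀ n, m < n → g n = j n m (g m)) : JConvM j g := by
  have hzero : ∀ m' ≥ m, limsup (fun n => ‖g n - j n m' (g m')‖) atTop = 0 := by
    intro m' hm'
    have hev : (fun n => ‖g n - j n m' (g m')‖) =ᶠ[atTop] fun _ => (0 : ℝ) := by
      filter_upwards [eventually_gt_atTop m'] with n hn
      have hgm' : j n m' (g m') = g n := by
        rcases hm'.eq_or_lt with rfl | hlt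
        · exact (hg n hn).symm
        · rw [hg m' hlt, hg n (hlt.trans hn)]
          exact LinearMap.congr_fun (hstrict n m' m hm' hn.le) (g m)
      simp [hgm']
    rw [limsup_congr hev, limsup_const]
  exact tendsto_const_nhds.congr' <|
    (eventually_ge_atTop m).mono fun m' hm' => (hzero m' hm').symm

theorem JConvM.exists_forall_ge_norm_sub_lt (hcontr : ∀ n m, m ≤ n → ∀ x, ‖j n m x‖ ≤ ‖x‖)
    {f : lp (fun n => 𝕄 k n) ⊤} (hf : JConvM j (fun n => f n)) {ε : ℝ} (hε : 0 < ε) :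
    ∃ m₀ N, ∀ n ≥ N, ‖f n - j n m₀ (f m₀)‖ < ε := by
  obtain ⟨m₀, hm₀⟩ := (hf.eventually (gt_mem_nhds hε)).exists
  have hbdd : IsBoundedUnder (· ≤ ·) atTop (fun n => ‖f n - j n m₀ (f m₀)‖) := by
    refine isBoundedUnder_of_eventually_le (a := ‖f‖ + ‖f m₀‖) ?_
    filter_upwards [eventually_ge_atTop m₀] with n hn
    exact (norm_sub_le _ _).trans <|
      add_le_add (lp.norm_apply_le_norm ENNReal.top_ne_zero f n) (hcontr n m₀ hn (f m₀))
  exact ⟨m₀, eventually_atTop.1 (eventually_lt_of_limsup_lt hm₀ hbdd)⟩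

theorem norm_apply_sub_le (hcontr : ∀ n m, m ≤ n → ∀ x, ‖j n m x‖ ≤ ‖x‖)
    (hstrict : ∀ n m l, l ≤ m → m ≤ n → (j n m).comp (j m l) = j n l)
    (f : ∀ n, 𝕄 k n) {m₀ m n : ℕ} (hm₀ : m₀ ≤ m) (hmn : m ≤ n) :
    ‖j n m (f m) - f n‖ ≤ ‖f m - j m m₀ (f m₀)‖ + ‖f n - j n m₀ (f m₀)‖ := by
  have hsplit : j n m (f m) - f n = j n m (f m - j m m₀ (f m₀)) - (f n - j n m₀ (f m₀)) := by
    rw [map_sub, ← LinearMap.comp_apply, hstrict n m m₀ hm₀ hmn]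
    abel
  rw [hsplit]
  exact (norm_sub_le _ _).trans (add_le_add_left (hcontr n m hmn _) _)

theorem tendsto_norm_extension_sub (hcontr : ∀ n m, m ≤ n → ∀ x, ‖j n m x‖ ≤ ‖x‖)
    (hstrict : ∀ n m l, l ≤ m → m ≤ n → (j n m).comp (j m l) = j n l)
    {f : lp (fun n => 𝕄 k n) ⊤} (hf : JConvM j (fun n => f n))
    {G : ℕ → lp (fun n => 𝕄 k n) ⊤} (hle : ∀ m n, n ≤ m → G m n = f n)
    (hgt : ∀ m n, m < n → G m n = j n m (f m)) :
    Tendsto (fun m => ‖G m - f‖) atTop (𝓝 0) := by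
  refine tendsto_order.2 ⟨fun ε hε => Eventually.of_forall fun m => hε.trans_le (norm_nonneg _),
    fun ε hε => ?_⟩
  obtain ⟨m₀, N, hN⟩ := hf.exists_forall_ge_norm_sub_lt j hcontr (div_pos hε three_pos)
  filter_upwards [eventually_ge_atTop (max N m₀)] with m hm
  have hNm : N ≤ m := le_of_max_le_left hm
  have hpos : 0 ≤ 2 * (ε / 3) := by positivity
  refine lt_of_le_of_lt (lp.norm_le_of_forall_le hpos fun n => ?_) (by linarith)
  rcases le_or_gt n m with hnm | hmn
  · simpa [hle m n hnm] using hpos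
  · rw [lp.coeFn_sub, Pi.sub_apply, hgt m n hmn]
    calc ‖j n m (f m) - f n‖ ≤ ‖f m - j m m₀ (f m₀)‖ + ‖f n - j n m₀ (f m₀)‖ :=
          norm_apply_sub_le j hcontr hstrict _ (le_of_max_le_right hm) hmn.le
      _ ≤ 2 * (ε / 3) := by linarith [hN m hNm, hN n (hNm.trans hmn.le)]

theorem norm_extension_le (hcontr : ∀ n m, m ≤ n → ∀ x, ‖j n m x‖ ≤ ‖x‖) {m : ℕ}
    (x : ∀ i : Fin (m + 1), 𝕄 k i) {g : lp (fun n => 𝕄 k n) ⊤}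
    (hle : ∀ n (h : n ≤ m), g n = x ⟨n, Nat.lt_succ_of_le h⟩)
    (hgt : ∀ n, m < n → g n = j n m (x ⟨m, Nat.lt_succ_self m⟩)) :
    ‖g‖ ≤ ‖x‖ := by
  refine lp.norm_le_of_forall_le (norm_nonneg x) fun n => ?_
  rcases le_or_gt n m with hnm | hmn
  · rw [hle n hnm]
    exact norm_le_pi_norm x _
  · rw [hgt n hmn]
    exact (hcontr n m hmn.le _).trans (norm_le_pi_norm x _)

theorem bigPos_extension
    (hcp : ∀ n m, m ≤ n → ∀ (r : ℕ) (x : Fin r → Fin r → 𝕄 k m),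
      BigPos x → BigPos (fun i l => j n m (x i l)))
    {m r : ℕ} {x : Fin r → Fin r → ∀ i : Fin (m + 1), 𝕄 k i}
    {g : Fin r → Fin r → ∀ n, 𝕄 k n}
    (hle : ∀ a b n (h : n ≤ m), g a b n = x a b ⟨n, Nat.lt_succ_of_le h⟩)
    (hgt : ∀ a b n, m < n → g a b n = j n m (x a b ⟨m, Nat.lt_succ_self m⟩))
    (hx : ∀ i : Fin (m + 1), BigPos (fun a b => x a b i)) (n : ℕ) :
    BigPos (fun a b => g a b n) := by
  rcases le_or_gt n m with hnm | hmn
  · simpa only [hle _ _ n hnm] using hx ⟨n, Nat.lt_succ_of_le hnm⟩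
  · simpa only [hgt _ _ n hmn] using hcp n m hmn.le r _ (hx ⟨m, Nat.lt_succ_self m⟩)

end StrictInductiveSequence

theorem stmt17_general (k : ℕ → ℕ)
    (j : ∀ n m, Matrix (Fin (k m)) (Fin (k m)) ℂ →ₗ[ℂ] Matrix (Fin (k n)) (Fin (k n)) ℂ)
    (hcontr : ∀ n m, m ≤ n → ∀ x, ‖j n m x‖ ≤ ‖x‖)
    (hcp : ∀ n m, m ≤ n → ∀ (r : ℕ) (x : Fin r → Fin r → Matrix (Fin (k m)) (Fin (k m)) ℂ),
      BigPos x → BigPos (fun i l => j n m (x i l)))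
    (hstrict : ∀ n m l, l ≤ m → m ≤ n → (j n m).comp (j m l) = j n l) :
    -- the compressions `ψ m` are completely positive contractions
    (∀ m (f : lp (fun n => Matrix (Fin (k n)) (Fin (k n)) ℂ) ⊤),
      ‖(fun i : Fin (m + 1) => f i : ∀ i : Fin (m + 1), Matrix (Fin (k i)) (Fin (k i)) ℂ)‖
        ≤ ‖f‖) ∧
    (∀ (m r : ℕ) (x : Fin r → Fin r → lp (fun n => Matrix (Fin (k n)) (Fin (k n)) ℂ) ⊤),
      (∀ n, BigPos (fun a b => x a b n)) →
      ∀ i : Fin (m + 1), BigPos (fun a b => x a b i)) ∧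
    -- `φ m` maps into `C(S,j)` and is a completely positive contraction
    (∀ (m : ℕ) (x : ∀ i : Fin (m + 1), Matrix (Fin (k i)) (Fin (k i)) ℂ)
        (g : lp (fun n => Matrix (Fin (k n)) (Fin (k n)) ℂ) ⊤),
      (∀ n (h : n ≤ m), g n = x ⟨n, Nat.lt_succ_of_le h⟩) →
      (∀ n, m < n → g n = j n m (x ⟨m, Nat.lt_succ_self m⟩)) →
      JConvM j (fun n => g n) ∧ ‖g‖ ≤ ‖x‖) ∧
    (∀ (m r : ℕ) (x : Fin r → Fin r → ∀ i : Fin (m + 1), Matrix (Fin (k i)) (Fin (k i)) ℂ)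
        (g : Fin r → Fin r → lp (fun n => Matrix (Fin (k n)) (Fin (k n)) ℂ) ⊤),
      (∀ a b n (h : n ≤ m), g a b n = x a b ⟨n, Nat.lt_succ_of_le h⟩) →
      (∀ a b n, m < n → g a b n = j n m (x a b ⟨m, Nat.lt_succ_self m⟩)) →
      (∀ i : Fin (m + 1), BigPos (fun a b => x a b i)) →
      ∀ n, BigPos (fun a b => g a b n)) ∧
    -- `φ m ∘ ψ m → id` pointwise in norm on `C(S,j)`
    (∀ f : lp (fun n => Matrix (Fin (k n)) (Fin (k n)) ℂ) ⊤, JConvM j (fun n => f n) →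
      ∀ G : ℕ → lp (fun n => Matrix (Fin (k n)) (Fin (k n)) ℂ) ⊤,
      (∀ m n, n ≤ m → G m n = f n) →
      (∀ m n, m < n → G m n = j n m (f m)) →
      Tendsto (fun m => ‖G m - f‖) atTop (𝓝 0)) := by
  refine ⟨fun m f => lp.pi_norm_comp_le_norm Fin.val f, fun m r x hx i => hx i,
    fun m x g hle hgt => ⟨?_, norm_extension_le j hcontr x hle hgt⟩,
    fun m r x g hle hgt => bigPos_extension j hcp hle hgt,
    fun f hf G hle hgt => tendsto_norm_extension_sub j hcontr hstrict hf hle hgt⟩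
  refine jConvM_of_forall_gt j hstrict (m := m) fun n hmn => ?_
  rw [hgt n hmn, hle m le_rfl]

/-- Let `(S, j)` be a strict inductive sequence of matrix algebras
`S n = M_{k n}` with ucp connecting maps.  Then the operator system `C(S,j)` of j-convergent
sequences inside `∏ₙ M_{k n}` is nuclear: the compressions
`ψ m : C(S,j) → ⊕_{i ≤ m} M_{k i}` and the maps
`φ m : (x₁,…,x_m) ↦ (x₁,…,x_m, j_{m+1,m} x_m, j_{m+2,m} x_m, …)` are completely positive
contractions, `φ m` maps into `C(S,j)`, and `φ m ∘ ψ m → id` pointwise in norm on `C(S,j)`. -/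
theorem stmt17 (k : ℕ → ℕ)
    (j : ∀ n m, Matrix (Fin (k m)) (Fin (k m)) ℂ →ₗ[ℂ] Matrix (Fin (k n)) (Fin (k n)) ℂ)
    (hcontr : ∀ n m, m ≤ n → ∀ x, ‖j n m x‖ ≤ ‖x‖)
    (hunital : ∀ n m, m ≤ n → j n m 1 = 1)
    (hcp : ∀ n m, m ≤ n → ∀ (r : ℕ) (x : Fin r → Fin r → Matrix (Fin (k m)) (Fin (k m)) ℂ),
      BigPos x → BigPos (fun i l => j n m (x i l)))
    (hstrict : ∀ n m l, l ≤ m → m ≤ n → (j n m).comp (j m l) = j n l) :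
    -- the compressions `ψ m` are completely positive contractions
    (∀ m (f : lp (fun n => Matrix (Fin (k n)) (Fin (k n)) ℂ) ⊤),
      ‖(fun i : Fin (m + 1) => f i : ∀ i : Fin (m + 1), Matrix (Fin (k i)) (Fin (k i)) ℂ)‖
        ≤ ‖f‖) ∧
    (∀ (m r : ℕ) (x : Fin r → Fin r → lp (fun n => Matrix (Fin (k n)) (Fin (k n)) ℂ) ⊤),
      (∀ n, BigPos (fun a b => x a b n)) →
      ∀ i : Fin (m + 1), BigPos (fun a b => x a b i)) ∧
    -- `φ m` maps into `C(S,j)` and is a completely positive contraction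
    (∀ (m : ℕ) (x : ∀ i : Fin (m + 1), Matrix (Fin (k i)) (Fin (k i)) ℂ)
        (g : lp (fun n => Matrix (Fin (k n)) (Fin (k n)) ℂ) ⊤),
      (∀ n (h : n ≤ m), g n = x ⟨n, Nat.lt_succ_of_le h⟩) →
      (∀ n, m < n → g n = j n m (x ⟨m, Nat.lt_succ_self m⟩)) →
      JConvM j (fun n => g n) ∧ ‖g‖ ≤ ‖x‖) ∧
    (∀ (m r : ℕ) (x : Fin r → Fin r → ∀ i : Fin (m + 1), Matrix (Fin (k i)) (Fin (k i)) ℂ)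
        (g : Fin r → Fin r → lp (fun n => Matrix (Fin (k n)) (Fin (k n)) ℂ) ⊤),
      (∀ a b n (h : n ≤ m), g a b n = x a b ⟨n, Nat.lt_succ_of_le h⟩) →
      (∀ a b n, m < n → g a b n = j n m (x a b ⟨m, Nat.lt_succ_self m⟩)) →
      (∀ i : Fin (m + 1), BigPos (fun a b => x a b i)) →
      ∀ n, BigPos (fun a b => g a b n)) ∧
    -- `φ m ∘ ψ m → id` pointwise in norm on `C(S,j)`
    (∀ f : lp (fun n => Matrix (Fin (k n)) (Fin (k n)) ℂ) ⊤, JConvM j (fun n => f n) →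
      ∀ G : ℕ → lp (fun n => Matrix (Fin (k n)) (Fin (k n)) ℂ) ⊤,
      (∀ m n, n ≤ m → G m n = f n) →
      (∀ m n, m < n → G m n = j n m (f m)) →
      Tendsto (fun m => ‖G m - f‖) atTop (𝓝 0)) :=
  stmt17_general k j hcontr hcp hstrict
end

section
/- Let (S, j) be a soft inductive system of operator systems where each S_n is a C*-algebra. Then the following are equivalent: (a) n-wise products of j-convergent nets are j-convergent; (b) the connecting maps are asymptotically multiplicative, i.e., lim_m limsup_n ‖ j_{nm}((j_{ml} a)(j_{ml} b)) − (j_{nl} a)(j_{nl} b) ‖ = 0 for all l and a, b ∈ A_l. Moreover, either condition implies (c): the limit space A_∞, embedded in the quotient C*-algebra ℕets(A)/C_0(A), is closed under products. -/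
/-!
(b) ⇒ (a): given bounded j-convergent nets `a`, `b` and `δ > 0`, pick `l` with `a`, `b` within
`δ` of the basic nets `n ↦ j n l (a l)`, `n ↦ j n l (b l)` (eventually in `n`). For large `m`,
`a n * b n` is then close to `j n l (a l) * j n l (b l)`, which by (b) is close to
`j n m (j m l (a l) * j m l (b l))`, which by contractivity of `j n m` is close to
`j n m (a m * b m)`. Only norms of products of bounded terms enter, so each error is `O(δ)`.

(a) ⇒ (b): the basic nets are bounded and, by asymptotic transitivity, j-convergent, and (a)
applied to two of them is exactly (b). Then (c) holds with `c = a * b`.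
-/

open Filter Topology

/-- Positivity of a matrix over a *-ring. -/
def MatPos {B : Type*} [NonUnitalSemiring B] [StarRing B] [PartialOrder B]
    {κ : Type*} [Fintype κ] (x : κ → κ → B) : Prop :=
  ∀ v : κ → B, 0 ≤ ∑ i, ∑ j, star (v i) * x i j * v j

section CStar

variable {ι : Type*} [Preorder ι]
variable {A : ι → Type*} [∀ n, NormedRing (A n)] [∀ n, StarRing (A n)]
  [∀ n, CStarRing (A n)] [∀ n, NormedAlgebra ℂ (A n)] [∀ n, StarModule ℂ (A n)]
  [∀ n, PartialOrder (A n)] [∀ n, StarOrderedRing (A n)]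

/-- A soft inductive system of operator systems whose spaces are the unital C*-algebras
`A n`: the connecting maps are ucp (unital, completely positive, contractive) and
asymptotically transitive. -/
def IsSoftCSystem (j : ∀ n m, A m →ₗ[ℂ] A n) : Prop :=
  (∀ n m, m ≤ n → j n m 1 = 1) ∧
  (∀ n m, m ≤ n → ∀ (ν : ℕ) (x : Fin ν → Fin ν → A m),
    MatPos x → MatPos (fun i k => j n m (x i k))) ∧
  (∀ n m, m ≤ n → ∀ a : A m, ‖j n m a‖ ≤ ‖a‖) ∧
  ∀ (l : ι) (a : A l),
    Tendsto (fun m => limsup (fun n => ‖j n l a - j n m (j m l a)‖) atTop) atTop (𝓝 0)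

/-- Uniformly bounded nets. -/
def CBdd (a : ∀ n, A n) : Prop := ∃ C : ℝ, ∀ n, ‖a n‖ ≤ C

/-- Null nets. -/
def CNull (a : ∀ n, A n) : Prop := Tendsto (fun n => ‖a n‖) atTop (𝓝 0)

/-- j-convergent nets. -/
def CJConv (j : ∀ n m, A m →ₗ[ℂ] A n) (a : ∀ n, A n) : Prop :=
  Tendsto (fun m => limsup (fun n => ‖a n - j n m (a m)‖) atTop) atTop (𝓝 0)

end CStar

section LimsupDoubleLimit

variable {α β : Type*} {la : Filter α} {lb : Filter β} [lb.NeBot] {F : α → β → ℝ}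

theorem tendsto_limsup_zero_iff_forall_eventually_le (hF : ∀ m n, 0 ≤ F m n)
    (hbdd : ∀ m, IsBoundedUnder (· ≤ ·) lb (F m)) :
    Tendsto (fun m => limsup (F m) lb) la (𝓝 0) ↔
      ∀ ε > 0, ∀ᶠ m in la, ∀ᶠ n in lb, F m n ≤ ε := by
  constructor
  · intro h ε hε
    filter_upwards [h.eventually_lt_const hε] with m hm
    exact (eventually_lt_of_limsup_lt hm (hbdd m)).mono fun _ => le_of_lt
  · intro h
    have hnonneg : ∀ m, 0 ≤ limsup (F m) lb := fun m =>
      le_limsup_of_le (hbdd m) fun b hb =>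
        let ⟨n, hn⟩ := hb.exists
        (hF m n).trans hn
    rw [Metric.tendsto_nhds]
    intro ε hε
    filter_upwards [h (ε / 2) (half_pos hε)] with m hm
    have hle : limsup (F m) lb ≤ ε / 2 := limsup_le_of_le (isCoboundedUnder_le_of_le lb (hF m)) hm
    rw [Real.dist_eq, sub_zero, abs_of_nonneg (hnonneg m)]
    linarith

end LimsupDoubleLimit

theorem norm_mul_sub_mul_le_of_le {R : Type*} [NonUnitalSeminormedRing R] {u u' v v' : R} {C : ℝ}
    (hv : ‖v‖ ≤ C) (hu' : ‖u'‖ ≤ C) : ‖u * v - u' * v'‖ ≤ C * (‖u - u'‖ + ‖v - v'‖) :=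
  calc ‖u * v - u' * v'‖ = ‖(u - u') * v + u' * (v - v')‖ := by noncomm_ring
    _ ≤ ‖u - u'‖ * ‖v‖ + ‖u'‖ * ‖v - v'‖ :=
      (norm_add_le _ _).trans (add_le_add (norm_mul_le _ _) (norm_mul_le _ _))
    _ ≤ ‖u - u'‖ * C + C * ‖v - v'‖ := by gcongr
    _ = C * (‖u - u'‖ + ‖v - v'‖) := by ring

theorem CBdd.mul {ι : Type*} {A : ι → Type*} [∀ n, NormedRing (A n)] {a b : ∀ n, A n}
    (ha : CBdd a) (hb : CBdd b) : CBdd (fun n => a n * b n) := by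
  obtain ⟨Ca, hCa⟩ := ha
  obtain ⟨Cb, hCb⟩ := hb
  exact ⟨Ca * Cb, fun n => (norm_mul_le _ _).trans
    (mul_le_mul (hCa n) (hCb n) (norm_nonneg _) ((norm_nonneg _).trans (hCa n)))⟩

section InductiveSystem

variable {ι : Type*} [Preorder ι] {A : ι → Type*} [∀ n, NormedRing (A n)]
  [∀ n, NormedAlgebra ℂ (A n)] {j : ∀ n m, A m →ₗ[ℂ] A n}

def IsAsympMult (j : ∀ n m, A m →ₗ[ℂ] A n) : Prop :=
  ∀ (l : ι) (x y : A l),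
    Tendsto (fun m => limsup (fun n => ‖j n m (j m l x * j m l y) - j n l x * j n l y‖) atTop)
      atTop (𝓝 0)

/-- Set to `0` where `n` is not above `l`, so that the net is bounded. -/
noncomputable def basicNet (j : ∀ n m, A m →ₗ[ℂ] A n) (l : ι) (x : A l) : ∀ n, A n :=
  open Classical in fun n => if l ≤ n then j n l x else 0

theorem basicNet_of_le {l n : ι} (x : A l) (h : l ≤ n) : basicNet j l x n = j n l x := if_pos h

theorem cBdd_basicNet (hcon : ∀ n m, m ≤ n → ∀ a : A m, ‖j n m a‖ ≤ ‖a‖) (l : ι) (x : A l) :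
    CBdd (basicNet j l x) := by
  refine ⟨‖x‖, fun n => ?_⟩
  by_cases h : l ≤ n
  · exact (basicNet_of_le x h).symm ▸ hcon n l h x
  · simp [basicNet, h]

theorem cJConv_basicNet {l : ι} {x : A l}
    (htrans : Tendsto (fun m => limsup (fun n => ‖j n l x - j n m (j m l x)‖) atTop) atTop (𝓝 0)) :
    CJConv j (basicNet j l x) := by
  refine htrans.congr' ?_
  filter_upwards [eventually_ge_atTop l] with m hlm
  refine limsup_congr ?_
  filter_upwards [eventually_ge_atTop l] with n hln
  rw [basicNet_of_le x hln, basicNet_of_le x hlm]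

theorem isAsympMult_of_forall_cJConv_mul (hcon : ∀ n m, m ≤ n → ∀ a : A m, ‖j n m a‖ ≤ ‖a‖)
    (htrans : ∀ (l : ι) (a : A l),
      Tendsto (fun m => limsup (fun n => ‖j n l a - j n m (j m l a)‖) atTop) atTop (𝓝 0))
    (hmul : ∀ a b : ∀ n, A n, CBdd a → CBdd b → CJConv j a → CJConv j b →
      CJConv j (fun n => a n * b n)) :
    IsAsympMult j := by
  intro l x y
  refine (hmul _ _ (cBdd_basicNet hcon l x) (cBdd_basicNet hcon l y) (cJConv_basicNet (htrans l x))
    (cJConv_basicNet (htrans l y))).congr' ?_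
  filter_upwards [eventually_ge_atTop l] with m hlm
  refine limsup_congr ?_
  filter_upwards [eventually_ge_atTop l] with n hln
  rw [basicNet_of_le x hln, basicNet_of_le y hln, basicNet_of_le x hlm, basicNet_of_le y hlm,
    norm_sub_rev]

variable [IsDirected ι (· ≤ ·)] [Nonempty ι]

theorem cJConv_iff_forall_eventually_le (hcon : ∀ n m, m ≤ n → ∀ a : A m, ‖j n m a‖ ≤ ‖a‖)
    {a : ∀ n, A n} (ha : CBdd a) :
    CJConv j a ↔ ∀ ε > 0, ∀ᶠ m in atTop, ∀ᶠ n in atTop, ‖a n - j n m (a m)‖ ≤ ε := by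
  obtain ⟨C, hC⟩ := ha
  refine tendsto_limsup_zero_iff_forall_eventually_le (fun _ _ => norm_nonneg _) fun m =>
    isBoundedUnder_of_eventually_le (a := C + C) ?_
  filter_upwards [eventually_ge_atTop m] with n hmn
  exact (norm_sub_le _ _).trans (add_le_add (hC n) ((hcon n m hmn _).trans (hC m)))

theorem IsAsympMult.forall_eventually_le (hcon : ∀ n m, m ≤ n → ∀ a : A m, ‖j n m a‖ ≤ ‖a‖)
    (h : IsAsympMult j) (l : ι) (x y : A l) :
    ∀ ε > 0, ∀ᶠ m in atTop, ∀ᶠ n in atTop,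
      ‖j n m (j m l x * j m l y) - j n l x * j n l y‖ ≤ ε := by
  refine (tendsto_limsup_zero_iff_forall_eventually_le (fun _ _ => norm_nonneg _) fun m =>
    isBoundedUnder_of_eventually_le (a := ‖j m l x * j m l y‖ + ‖x‖ * ‖y‖) ?_).1 (h l x y)
  filter_upwards [eventually_ge_atTop m, eventually_ge_atTop l] with n hmn hln
  refine (norm_sub_le _ _).trans (add_le_add (hcon n m hmn _) ?_)
  exact (norm_mul_le _ _).trans (mul_le_mul (hcon n l hln x) (hcon n l hln y) (norm_nonneg _)
    (norm_nonneg _))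

theorem CJConv.mul_of_isAsympMult (hcon : ∀ n m, m ≤ n → ∀ a : A m, ‖j n m a‖ ≤ ‖a‖)
    (hmult : IsAsympMult j) {a b : ∀ n, A n} (ha : CBdd a) (hb : CBdd b) (hca : CJConv j a)
    (hcb : CJConv j b) : CJConv j (fun n => a n * b n) := by
  obtain ⟨Ca, hCa⟩ := ha
  obtain ⟨Cb, hCb⟩ := hb
  set C := max Ca Cb
  have haC : ∀ n, ‖a n‖ ≤ C := fun n => (hCa n).trans (le_max_left _ _)
  have hbC : ∀ n, ‖b n‖ ≤ C := fun n => (hCb n).trans (le_max_right _ _)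
  have hC : 0 ≤ C := (norm_nonneg _).trans (haC (Classical.arbitrary ι))
  rw [cJConv_iff_forall_eventually_le hcon ⟨Ca, hCa⟩] at hca
  rw [cJConv_iff_forall_eventually_le hcon ⟨Cb, hCb⟩] at hcb
  rw [cJConv_iff_forall_eventually_le hcon (CBdd.mul ⟨Ca, hCa⟩ ⟨Cb, hCb⟩)]
  intro ε hε
  set δ := ε / (4 * C + 1)
  have hδ : 0 < δ := by positivity
  obtain ⟨l, hal, hbl⟩ := ((hca δ hδ).and (hcb δ hδ)).exists
  set x := a l
  set y := b l
  filter_upwards [eventually_ge_atTop l, hal, hbl, hmult.forall_eventually_le hcon l x y δ hδ]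
    with m hlm ham hbm hmultm
  filter_upwards [eventually_ge_atTop l, eventually_ge_atTop m, hal, hbl, hmultm]
    with n hln hmn han hbn hmultn
  have hjx : ∀ k, l ≤ k → ‖j k l x‖ ≤ C := fun k hk => (hcon k l hk x).trans (haC l)
  have hjy : ∀ k, l ≤ k → ‖j k l y‖ ≤ C := fun k hk => (hcon k l hk y).trans (hbC l)
  calc ‖a n * b n - j n m (a m * b m)‖
      ≤ ‖a n * b n - j n l x * j n l y‖
        + ‖j n l x * j n l y - j n m (j m l x * j m l y)‖
        + ‖j n m (j m l x * j m l y - a m * b m)‖ := by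
        rw [map_sub]
        refine (norm_sub_le_norm_sub_add_norm_sub _ (j n m (j m l x * j m l y)) _).trans ?_
        gcongr
        exact norm_sub_le_norm_sub_add_norm_sub _ _ _
    _ ≤ C * (δ + δ) + δ + C * (δ + δ) := by
        gcongr
        · exact (norm_mul_sub_mul_le_of_le (hbC n) (hjx n hln)).trans (by gcongr)
        · rwa [norm_sub_rev]
        · refine (hcon n m hmn _).trans ((norm_mul_sub_mul_le_of_le (hjy m hlm) (haC m)).trans ?_)
          rw [norm_sub_rev (j m l x), norm_sub_rev (j m l y)]
          gcongr
    _ = ε := by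
        simp only [δ]
        field_simp
        ring

end InductiveSystem

/-- For a soft inductive system of operator systems whose spaces are unital
C*-algebras, the following are equivalent: (a) entrywise products of j-convergent nets are
j-convergent; (b) the connecting maps are asymptotically multiplicative.  Moreover, either
condition implies (c): the limit space, inside the quotient C*-algebra `ℕets(A)/C₀(A)`, is
closed under products, i.e. the entrywise product of two j-convergent nets agrees with a
j-convergent net up to a null net. -/
theorem stmt19 {ι : Type*} [Preorder ι] [Nonempty ι] [IsDirected ι (· ≤ ·)]
    {A : ι → Type*} [∀ n, NormedRing (A n)] [∀ n, StarRing (A n)]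
    [∀ n, CStarRing (A n)] [∀ n, NormedAlgebra ℂ (A n)] [∀ n, StarModule ℂ (A n)]
    [∀ n, PartialOrder (A n)] [∀ n, StarOrderedRing (A n)]
    (j : ∀ n m, A m →ₗ[ℂ] A n) (hj : IsSoftCSystem j) :
    (((∀ a b : ∀ n, A n, CBdd a → CBdd b → CJConv j a → CJConv j b →
        CJConv j (fun n => a n * b n)) ↔
      (∀ (l : ι) (x y : A l),
        Tendsto (fun m => limsup
            (fun n => ‖j n m (j m l x * j m l y) - j n l x * j n l y‖) atTop)
          atTop (𝓝 0)))) ∧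
    ((∀ (l : ι) (x y : A l),
        Tendsto (fun m => limsup
            (fun n => ‖j n m (j m l x * j m l y) - j n l x * j n l y‖) atTop)
          atTop (𝓝 0)) →
      ∀ a b : ∀ n, A n, CBdd a → CBdd b → CJConv j a → CJConv j b →
        ∃ c : ∀ n, A n, CBdd c ∧ CJConv j c ∧ CNull (fun n => a n * b n - c n)) := by
  obtain ⟨-, -, hcon, htrans⟩ := hj
  have hab : (∀ a b : ∀ n, A n, CBdd a → CBdd b → CJConv j a → CJConv j b →
      CJConv j (fun n => a n * b n)) ↔ IsAsympMult j :=
    ⟨isAsympMult_of_forall_cJConv_mul hcon htrans,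
      fun hmult _ _ ha hb hca hcb => hca.mul_of_isAsympMult hcon hmult ha hb hcb⟩
  refine ⟨hab, fun hmult a b ha hb hca hcb =>
    ⟨fun n => a n * b n, ha.mul hb, hab.2 hmult a b ha hb hca hcb, ?_⟩⟩
  simp [CNull]
end
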